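/- arXiv:2307.02562 — 12 statements merged into one kernel-verified Lean document; each statement's English description precedes it below -/
import Mathlib

section
/- Let (X,d) be a compact metric space and T: X → X a continuous map. If F is a nonempty finite subset of X such that the intersection over x in F of the orbit closures of x under T is nonempty, then the intersection over x in F of the omega-limit sets ω(x) is nonempty. -/
open Filter Topology MeasureTheory Metric Set TopologicalSpace

section Defs

variable {X : Type*} [TopologicalSpace X]

/-- The `n`-th Birkhoff average of `φ` along the orbit of `x` under `T`. -/
noncomputable def birkhoffAvg (T : X → X) (φ : X → ℝ) (x : X) (n : ℕ) : ℝ :=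
  (∑ j ∈ Finset.range n, φ (T^[j] x)) / n

/-- The set of `(T,φ)`-irregular points. -/
def irregularSet (T : X → X) (φ : X → ℝ) : Set X :=
  {x | ¬ ∃ l : ℝ, Tendsto (fun n => birkhoffAvg T φ x n) atTop (𝓝 l)}

/-- The set of completely irregular points of `T`. -/
def completelyIrregular (T : X → X) : Set X :=
  {x | ∀ φ : X → ℝ, Continuous φ → (irregularSet T φ).Nonempty → x ∈ irregularSet T φ}

/-- The omega-limit set of `x` under `T`. -/
def omegaLimitSet (T : X → X) (x : X) : Set X :=
  ⋂ N : ℕ, closure ((fun n => T^[n] x) '' Set.Ici N)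

/-- The closure of the forward orbit of `x` under `T`. -/
def orbitClosure (T : X → X) (x : X) : Set X :=
  closure (Set.range fun n : ℕ => T^[n] x)

/-- Topological transitivity. -/
def TopTransitive (T : X → X) : Prop :=
  ∀ U V : Set X, IsOpen U → IsOpen V → U.Nonempty → V.Nonempty →
    ∃ n : ℕ, (U ∩ T^[n] ⁻¹' V).Nonempty

/-- The set of non-wandering points of `T`. -/
def nonWandering (T : X → X) : Set X :=
  {z | ∀ U : Set X, IsOpen U → z ∈ U → ∃ N : ℕ, 1 ≤ N ∧ (T^[N] '' U ∩ U).Nonempty}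

/-- The space `X` has no isolated points. -/
def NoIsolatedPoints (X : Type*) [TopologicalSpace X] : Prop :=
  ∀ x : X, (𝓝[≠] x).NeBot

end Defs

/-- The shadowing property. -/
def ShadowingProperty {X : Type*} [MetricSpace X] (T : X → X) : Prop :=
  ∀ ε > 0, ∃ δ > 0, ∀ u : ℕ → X, (∀ n, dist (T (u n)) (u (n + 1)) < δ) →
    ∃ y : X, ∀ n, dist (T^[n] y) (u n) < ε

section MeasureDefs

variable {X : Type*} [TopologicalSpace X] [MeasurableSpace X]

/-- `μ` is a `T`-invariant Borel probability measure. -/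
def InvariantProb (T : X → X) (μ : ProbabilityMeasure X) : Prop :=
  (μ : Measure X).map T = (μ : Measure X)

/-- The (topological) support of a probability measure. -/
def msupp (μ : ProbabilityMeasure X) : Set X :=
  {x | ∀ U : Set X, x ∈ U → IsOpen U → 0 < (μ : Measure X) U}

/-- `μ ∈ V_T(x)`: `μ` is a weak* accumulation point of the empirical measures
along the orbit of `x`, characterized through convergence of Birkhoff averages of
every continuous function along a subsequence. -/
def memVT (T : X → X) (x : X) (μ : ProbabilityMeasure X) : Prop :=
  ∃ n : ℕ → ℕ, StrictMono n ∧ ∀ φ : X → ℝ, Continuous φ →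
    Tendsto (fun k => birkhoffAvg T φ x (n k)) atTop (𝓝 (∫ y, φ y ∂(μ : Measure X)))

/-- The measure center of `T`. -/
def measureCenter (T : X → X) : Set X :=
  closure (⋃ μ ∈ {μ : ProbabilityMeasure X | InvariantProb T μ}, msupp μ)

/-- The basin of attraction of an invariant probability measure. -/
def basin (T : X → X) (η : ProbabilityMeasure X) : Set X :=
  {x | ∀ ψ : X → ℝ, Continuous ψ →
    Tendsto (fun n => birkhoffAvg T ψ x n) atTop (𝓝 (∫ y, ψ y ∂(η : Measure X)))}

end MeasureDefs


theorem stmt0 {X : Type*} [MetricSpace X] [CompactSpace X] {T : X → X} (hT : Continuous T)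
    (F : Set X) (hFfin : F.Finite) (hFne : F.Nonempty)
    (h : (⋂ x ∈ F, orbitClosure T x).Nonempty) :
    (⋂ x ∈ F, omegaLimitSet T x).Nonempty := by
  obtain ⟨z, hz⟩ := h
  simp only [Set.mem_iInter] at hz
  have hne : (omegaLimitSet T z).Nonempty := by
    apply IsCompact.nonempty_iInter_of_sequence_nonempty_isCompact_isClosed
    · intro i
      exact closure_mono (Set.image_mono fun m hm => le_trans (Nat.le_succ i) hm)
    · intro i
      exact ⟨T^[i] z, subset_closure ⟨i, le_refl i, rfl⟩⟩
    · exact isClosed_closure.isCompact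
    · intro i; exact isClosed_closure
  obtain ⟨p, hp⟩ := hne
  refine ⟨p, ?_⟩
  simp only [Set.mem_iInter]
  intro x hx
  have hzx : z ∈ closure (Set.range fun n : ℕ => T^[n] x) := hz x hx
  simp only [omegaLimitSet, Set.mem_iInter] at hp ⊢
  intro N
  have hsub : ((fun n => T^[n] z) '' Set.Ici N) ⊆
      closure ((fun n => T^[n] x) '' Set.Ici N) := by
    rintro _ ⟨m, hm, rfl⟩
    have h1 : T^[m] z ∈ T^[m] '' closure (Set.range fun n : ℕ => T^[n] x) := ⟨z, hzx, rfl⟩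
    have h2 : T^[m] '' closure (Set.range fun n : ℕ => T^[n] x) ⊆
        closure (T^[m] '' Set.range fun n : ℕ => T^[n] x) :=
      image_closure_subset_closure_image (hT.iterate m)
    refine closure_mono ?_ (h2 h1)
    rintro _ ⟨_, ⟨n, rfl⟩, rfl⟩
    exact ⟨m + n, le_trans hm (Nat.le_add_right m n), (Function.iterate_add_apply T m n x)⟩
  exact closure_minimal hsub isClosed_closure (hp N)
end

section
/- Let (X,d) be a compact metric space without isolated points and T: X → X a continuous map. If x, y are completely irregular points of T, then the set of measures μ in V_T(y) whose support is disjoint from ω(x) has cardinality at most one. -/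
open Filter Topology MeasureTheory Metric Set TopologicalSpace

section Aux

variable {X : Type*} [MetricSpace X] [CompactSpace X]

lemma isClosed_msupp' [MeasurableSpace X] (μ : ProbabilityMeasure X) : IsClosed (msupp μ) := by
  rw [← isOpen_compl_iff, isOpen_iff_mem_nhds]
  intro z hz
  simp only [msupp, mem_compl_iff, mem_setOf_eq, not_forall] at hz
  obtain ⟨U, hzU, hUo, hU0⟩ := hz
  filter_upwards [hUo.mem_nhds hzU] with w hw
  simp only [msupp, mem_compl_iff, mem_setOf_eq, not_forall]
  exact ⟨U, hw, hUo, hU0⟩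

lemma msupp_compl_null' [MeasurableSpace X] (μ : ProbabilityMeasure X) :
    (μ : Measure X) (msupp μ)ᶜ = 0 := by
  apply measure_null_of_locally_null
  intro z hz
  simp only [msupp, mem_compl_iff, mem_setOf_eq, not_forall] at hz
  obtain ⟨U, hzU, hUo, hU0⟩ := hz
  refine ⟨U, nhdsWithin_le_nhds (hUo.mem_nhds hzU), ?_⟩
  simpa using hU0

lemma isClosed_omegaLimitSet' (T : X → X) (x : X) : IsClosed (omegaLimitSet T x) :=
  isClosed_iInter fun _ => isClosed_closure

lemma eventually_mem_of_omegaLimit_subset {T : X → X} {x : X} {U : Set X} (hU : IsOpen U)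
    (h : omegaLimitSet T x ⊆ U) : ∀ᶠ n in atTop, T^[n] x ∈ U := by
  set K : ℕ → Set X := fun N => closure ((fun n => T^[n] x) '' Set.Ici N) ∩ Uᶜ with hK
  have hanti : Antitone K := by
    intro a b hab
    exact inter_subset_inter_left _ (closure_mono (image_mono (f := fun n => T^[n] x) (Ici_subset_Ici.2 hab)))
  by_cases hne : ∀ N, (K N).Nonempty
  · exfalso
    have hcl' : ∀ N, IsClosed (K N) := fun N => isClosed_closure.inter hU.isClosed_compl
    have hcomp : ∀ N, IsCompact (K N) := fun N => (hcl' N).isCompact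
    have := IsCompact.nonempty_iInter_of_directed_nonempty_isCompact_isClosed K
      (hanti.directed_ge) hne hcomp hcl'
    obtain ⟨z, hz⟩ := this
    have hzω : z ∈ omegaLimitSet T x := by
      refine mem_iInter.2 fun N => ?_
      exact ((mem_iInter.1 hz N).1)
    have hzU : z ∈ Uᶜ := (mem_iInter.1 hz 0).2
    exact hzU (h hzω)
  · push_neg at hne
    obtain ⟨N, hN⟩ := hne
    filter_upwards [eventually_ge_atTop N] with n hn
    by_contra hnU
    have : T^[n] x ∈ K N := ⟨subset_closure ⟨n, hn, rfl⟩, hnU⟩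
    simp [hN] at this

end Aux

open scoped NNReal BoundedContinuousFunction

theorem stmt2 {X : Type*} [MetricSpace X] [CompactSpace X] [MeasurableSpace X] [BorelSpace X]
    (hX : NoIsolatedPoints X) {T : X → X} (hT : Continuous T)
    {x y : X} (hx : x ∈ completelyIrregular T) (hy : y ∈ completelyIrregular T) :
    {μ : ProbabilityMeasure X | memVT T y μ ∧ msupp μ ∩ omegaLimitSet T x = ∅}.Subsingleton := by
  rintro μ₁ ⟨h₁V, h₁d⟩ μ₂ ⟨h₂V, h₂d⟩
  by_contra hne
  have hMne : (μ₁ : Measure X) ≠ (μ₂ : Measure X) := fun h =>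
    hne (MeasureTheory.ProbabilityMeasure.toMeasure_injective h)
  obtain ⟨f, hf⟩ : ∃ f : X →ᵇ ℝ≥0,
      (∫⁻ z, f z ∂(μ₁ : Measure X)) ≠ ∫⁻ z, f z ∂(μ₂ : Measure X) := by
    by_contra h; push_neg at h
    exact hMne (MeasureTheory.ext_of_forall_lintegral_eq_of_IsFiniteMeasure h)
  set φ : X → ℝ := fun z => (f z : ℝ) with hφdef
  have hφc : Continuous φ := NNReal.continuous_coe.comp f.continuous
  have hIne : (∫ z, φ z ∂(μ₁ : Measure X)) ≠ ∫ z, φ z ∂(μ₂ : Measure X) := by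
    rw [← BoundedContinuousFunction.toReal_lintegral_coe_eq_integral,
        ← BoundedContinuousFunction.toReal_lintegral_coe_eq_integral]
    intro h
    exact hf ((ENNReal.toReal_eq_toReal_iff'
      (BoundedContinuousFunction.lintegral_lt_top_of_nnreal _ f).ne
      (BoundedContinuousFunction.lintegral_lt_top_of_nnreal _ f).ne).1 h)
  have hd : Disjoint (omegaLimitSet T x) (msupp μ₁ ∪ msupp μ₂) := by
    rw [disjoint_union_right]
    constructor
    · rw [disjoint_comm, Set.disjoint_iff_inter_eq_empty]; exact h₁d
    · rw [disjoint_comm, Set.disjoint_iff_inter_eq_empty]; exact h₂d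
  obtain ⟨g, hg0, hg1, hg01⟩ := exists_continuous_zero_one_of_isClosed
    (isClosed_omegaLimitSet' T x) ((isClosed_msupp' μ₁).union (isClosed_msupp' μ₂)) hd
  set ψ : X → ℝ := fun z => φ z * g z with hψdef
  have hψc : Continuous ψ := hφc.mul g.continuous
  have key : ∀ μ : ProbabilityMeasure X, msupp μ ⊆ msupp μ₁ ∪ msupp μ₂ →
      ∫ z, ψ z ∂(μ : Measure X) = ∫ z, φ z ∂(μ : Measure X) := by
    intro μ hsub
    apply integral_congr_ae
    have h0 : (μ : Measure X) (msupp μ)ᶜ = 0 := msupp_compl_null' μ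
    have hae : ∀ᵐ z ∂(μ : Measure X), z ∈ msupp μ := by
      rw [MeasureTheory.ae_iff]
      exact h0
    filter_upwards [hae] with z hz
    have : g z = 1 := hg1 (hsub hz)
    simp [hψdef, this]
  have hyirr : y ∈ irregularSet T ψ := by
    obtain ⟨n₁, hn₁, hc₁⟩ := h₁V
    obtain ⟨n₂, hn₂, hc₂⟩ := h₂V
    rintro ⟨l, hl⟩
    have t₁ := hc₁ ψ hψc
    have t₂ := hc₂ ψ hψc
    have e₁ : Tendsto (fun k => birkhoffAvg T ψ y (n₁ k)) atTop (𝓝 l) :=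
      hl.comp hn₁.tendsto_atTop
    have e₂ : Tendsto (fun k => birkhoffAvg T ψ y (n₂ k)) atTop (𝓝 l) :=
      hl.comp hn₂.tendsto_atTop
    have eq₁ := tendsto_nhds_unique t₁ e₁
    have eq₂ := tendsto_nhds_unique t₂ e₂
    apply hIne
    rw [← key μ₁ subset_union_left, ← key μ₂ subset_union_right, eq₁, eq₂]
  have hxirr : x ∈ irregularSet T ψ := hx ψ hψc ⟨y, hyirr⟩
  apply hxirr
  refine ⟨0, ?_⟩
  have horb : Tendsto (fun j => ψ (T^[j] x)) atTop (𝓝 0) := by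
    rw [_root_.tendsto_nhds]
    intro s hs h0s
    have hωs : omegaLimitSet T x ⊆ ψ ⁻¹' s := by
      intro z hz
      have hz0 : ψ z = 0 := by
        have : g z = 0 := hg0 hz
        simp [hψdef, this]
      rw [mem_preimage, hz0]
      exact h0s
    exact eventually_mem_of_omegaLimit_subset (hs.preimage hψc) hωs
  have := horb.cesaro
  exact this.congr fun n => (div_eq_inv_mul _ _).symm
end

section
/- Let (X,d) be a compact metric space without isolated points and T: X → X a continuous map. If x, y are completely irregular points and μ, ν ∈ V_T(y), then supp(μ) ∩ (X \ ω(x)) = supp(ν) ∩ (X \ ω(x)). -/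
open Filter Topology MeasureTheory Metric Set TopologicalSpace

open MeasureTheory in
theorem key_supp_lemma {X : Type*} [MetricSpace X] [CompactSpace X] [MeasurableSpace X]
    [BorelSpace X] {T : X → X} {x y : X} (hx : x ∈ completelyIrregular T)
    {μ ν : ProbabilityMeasure X} (hμ : memVT T y μ) (hν : memVT T y ν)
    {z : X} (hzμ : z ∈ msupp μ) (hzω : z ∉ omegaLimitSet T x) : z ∈ msupp ν := by
  intro U hzU hU
  obtain ⟨N, hN⟩ : ∃ N : ℕ, z ∉ closure ((fun n => T^[n] x) '' Set.Ici N) := by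
    by_contra h; push_neg at h; exact hzω (Set.mem_iInter.2 h)
  obtain ⟨ε₁, hε₁, hball₁⟩ := Metric.isOpen_iff.1 isClosed_closure.isOpen_compl z hN
  obtain ⟨ε₂, hε₂, hball₂⟩ := Metric.isOpen_iff.1 hU z hzU
  set r : ℝ := min ε₁ ε₂ / 2 with hrdef
  have hrpos : 0 < r := by positivity
  have hrε₁ : r < ε₁ := by
    have h1 : min ε₁ ε₂ ≤ ε₁ := min_le_left _ _
    have h2 : 0 < min ε₁ ε₂ := lt_min hε₁ hε₂
    rw [hrdef]; linarith
  have hrε₂ : r ≤ ε₂ := by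
    have h1 : min ε₁ ε₂ ≤ ε₂ := min_le_right _ _
    have h2 : 0 < min ε₁ ε₂ := lt_min hε₁ hε₂
    rw [hrdef]; linarith
  set φ : X → ℝ := fun w => max (1 - dist w z / r) 0 with hφdef
  have hφc : Continuous φ := by
    apply Continuous.max _ continuous_const
    exact (continuous_const.sub ((continuous_id.dist continuous_const).div_const r))
  have hφ0 : ∀ w, 0 ≤ φ w := fun w => le_max_right _ _
  have hsupp : Function.support φ = Metric.ball z r := by
    ext w
    simp only [Function.mem_support, hφdef, Metric.mem_ball]
    constructor
    · intro h
      by_contra hw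
      push_neg at hw
      apply h
      have h1 : 1 ≤ dist w z / r := (one_le_div hrpos).2 hw
      have h2 : 1 - dist w z / r ≤ 0 := by linarith
      exact max_eq_right h2
    · intro h
      have h1 : dist w z / r < 1 := (div_lt_one hrpos).2 h
      have h2 : 0 < 1 - dist w z / r := by linarith
      exact (lt_max_iff.2 (Or.inl h2)).ne'
  -- φ vanishes on the tail orbit of x
  have htail : ∀ n, N ≤ n → φ (T^[n] x) = 0 := by
    intro n hn
    have hmem : T^[n] x ∈ closure ((fun m => T^[m] x) '' Set.Ici N) :=
      subset_closure ⟨n, hn, rfl⟩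
    have hdist : ¬ (T^[n] x ∈ Metric.ball z ε₁) := fun hb => (hball₁ hb) hmem
    rw [Metric.mem_ball, not_lt] at hdist
    have h1 : r ≤ dist (T^[n] x) z := le_trans hrε₁.le hdist
    have h2 : 1 ≤ dist (T^[n] x) z / r := (one_le_div hrpos).2 h1
    have h3 : 1 - dist (T^[n] x) z / r ≤ 0 := by linarith
    exact max_eq_right h3
  -- Birkhoff averages of x converge to 0
  have hxconv : Tendsto (fun n => birkhoffAvg T φ x n) atTop (𝓝 0) := by
    have hC : ∀ n, N ≤ n →
        (∑ j ∈ Finset.range n, φ (T^[j] x)) = ∑ j ∈ Finset.range N, φ (T^[j] x) := by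
      intro n hn
      refine (Finset.sum_subset (Finset.range_subset_range.2 hn) ?_).symm
      intro j hj hjN
      exact htail j (le_of_not_gt (fun h => hjN (Finset.mem_range.2 h)))
    have h0 : Tendsto (fun n : ℕ => (∑ j ∈ Finset.range N, φ (T^[j] x)) / (n : ℝ))
        atTop (𝓝 0) := tendsto_const_div_atTop_nhds_zero_nat _
    refine h0.congr' ?_
    filter_upwards [eventually_ge_atTop N] with n hn
    simp only [birkhoffAvg, hC n hn]
  -- x is not irregular for φ, hence the irregular set is empty
  have hemp : ¬ (irregularSet T φ).Nonempty := by
    intro h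
    exact (hx φ hφc h) ⟨0, hxconv⟩
  -- so the Birkhoff averages of y converge to some l
  obtain ⟨l, hl⟩ : ∃ l : ℝ, Tendsto (fun n => birkhoffAvg T φ y n) atTop (𝓝 l) := by
    by_contra h
    exact hemp ⟨y, h⟩
  -- integrability
  have hcs : HasCompactSupport φ :=
    IsCompact.of_isClosed_subset isCompact_univ (isClosed_tsupport φ) (Set.subset_univ _)
  have hintμ : Integrable φ (μ : Measure X) := hφc.integrable_of_hasCompactSupport hcs
  have hintν : Integrable φ (ν : Measure X) := hφc.integrable_of_hasCompactSupport hcs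
  -- limits along subsequences give the integrals
  obtain ⟨a, ha, haφ⟩ := hμ
  obtain ⟨b, hb, hbφ⟩ := hν
  have hμl : (∫ w, φ w ∂(μ : Measure X)) = l :=
    tendsto_nhds_unique (haφ φ hφc) (hl.comp ha.tendsto_atTop)
  have hνl : (∫ w, φ w ∂(ν : Measure X)) = l :=
    tendsto_nhds_unique (hbφ φ hφc) (hl.comp hb.tendsto_atTop)
  -- positivity of the μ-integral
  have hposμ : 0 < ∫ w, φ w ∂(μ : Measure X) := by
    rw [MeasureTheory.integral_pos_iff_support_of_nonneg hφ0 hintμ, hsupp]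
    exact hzμ _ (Metric.mem_ball_self hrpos) Metric.isOpen_ball
  have hposν : 0 < ∫ w, φ w ∂(ν : Measure X) := by rw [hνl, ← hμl]; exact hposμ
  have hν0 : 0 < (ν : Measure X) (Metric.ball z r) := by
    rw [← hsupp]
    exact (MeasureTheory.integral_pos_iff_support_of_nonneg hφ0 hintν).1 hposν
  refine lt_of_lt_of_le hν0 (measure_mono ?_)
  exact (Metric.ball_subset_ball hrε₂).trans hball₂

theorem stmt3 {X : Type*} [MetricSpace X] [CompactSpace X] [MeasurableSpace X] [BorelSpace X]
    (hX : NoIsolatedPoints X) {T : X → X} (hT : Continuous T)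
    {x y : X} (hx : x ∈ completelyIrregular T) (hy : y ∈ completelyIrregular T)
    {μ ν : ProbabilityMeasure X} (hμ : memVT T y μ) (hν : memVT T y ν) :
    msupp μ ∩ (omegaLimitSet T x)ᶜ = msupp ν ∩ (omegaLimitSet T x)ᶜ := by
  ext z
  simp only [Set.mem_inter_iff, Set.mem_compl_iff]
  constructor
  · rintro ⟨hz, hzω⟩
    exact ⟨key_supp_lemma hx hμ hν hz hzω, hzω⟩
  · rintro ⟨hz, hzω⟩
    exact ⟨key_supp_lemma hx hν hμ hz hzω, hzω⟩
end

section
/- Let (X,d) be a compact metric space without isolated points and T: X → X a continuous map. Suppose K is a nonempty subset of the space of T-invariant Borel probability measures and there exists x₀ ∈ X with K ⊆ V_T(x₀). Then the closure of the union of supports of measures in K is contained in ω(x₀), and ω(x₀) is contained in the closure of the set {x ∈ X : K ⊆ V_T(x)}. -/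
open Filter Topology MeasureTheory Metric Set TopologicalSpace

lemma memVT_shift {X : Type*} [MetricSpace X] [CompactSpace X] [MeasurableSpace X]
    {T : X → X} {x : X} {μ : ProbabilityMeasure X} (h : memVT T x μ) : memVT T (T x) μ := by
  obtain ⟨n, hn, hconv⟩ := h
  refine ⟨n, hn, fun φ hφ => ?_⟩
  have hkey : ∀ m : ℕ, birkhoffAvg T φ (T x) m
      = birkhoffAvg T φ x m + (φ (T^[m] x) - φ x) / m := by
    intro m
    have hs : ∑ j ∈ Finset.range m, φ (T^[j] (T x))
        = (∑ j ∈ Finset.range m, φ (T^[j] x)) + φ (T^[m] x) - φ x := by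
      have := Finset.sum_range_succ' (fun j => φ (T^[j] x)) m
      simp only [Function.iterate_succ_apply] at this ⊢
      rw [Finset.sum_range_succ] at this
      simp at this ⊢
      linarith
    simp only [birkhoffAvg, hs]
    ring
  obtain ⟨C, hC⟩ := (isCompact_univ (X := X)).exists_bound_of_continuousOn hφ.continuousOn
  have hnk : Tendsto (fun k => (n k : ℝ)) atTop atTop :=
    tendsto_natCast_atTop_atTop.comp hn.tendsto_atTop
  have h0 : Tendsto (fun k => (φ (T^[n k] x) - φ x) / (n k : ℝ)) atTop (𝓝 0) := by
    refine squeeze_zero_norm (a := fun k => (2 * C) / (n k : ℝ)) (fun k => ?_) ?_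
    · rw [norm_div, Real.norm_natCast]
      rcases Nat.eq_zero_or_pos (n k) with h | h
      · simp [h]
      · rw [div_le_div_iff_of_pos_right (by exact_mod_cast h)]
        calc ‖φ (T^[n k] x) - φ x‖ ≤ ‖φ (T^[n k] x)‖ + ‖φ x‖ := norm_sub_le _ _
          _ ≤ C + C := add_le_add (hC _ (mem_univ _)) (hC _ (mem_univ _))
          _ = 2 * C := by ring
    · have := tendsto_const_div_atTop_nhds_zero_nat (2 * C)
      exact (this.comp hn.tendsto_atTop)
  have := (hconv φ hφ).add h0
  simpa [hkey] using this

theorem stmt6 {X : Type*} [MetricSpace X] [CompactSpace X] [MeasurableSpace X] [BorelSpace X]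
    (hX : NoIsolatedPoints X) {T : X → X} (hT : Continuous T)
    (K : Set (ProbabilityMeasure X)) (hKne : K.Nonempty)
    (hKinv : ∀ μ ∈ K, InvariantProb T μ)
    (x₀ : X) (hx₀ : ∀ μ ∈ K, memVT T x₀ μ) :
    closure (⋃ μ ∈ K, msupp μ) ⊆ omegaLimitSet T x₀ ∧
      omegaLimitSet T x₀ ⊆ closure {x : X | ∀ μ ∈ K, memVT T x μ} := by
  constructor
  · -- supports are in the omega-limit set
    apply closure_minimal ?_ (isClosed_iInter fun _ => isClosed_closure)
    rintro z hz
    simp only [mem_iUnion] at hz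
    obtain ⟨μ, hμK, hzs⟩ := hz
    simp only [omegaLimitSet, mem_iInter]
    intro N
    by_contra hc
    obtain ⟨r, hr, hball⟩ := Metric.isOpen_iff.1 isClosed_closure.isOpen_compl z hc
    set φ : X → ℝ := fun y => max 0 (1 - dist y z / r) with hφdef
    have hφc : Continuous φ :=
      continuous_const.max (continuous_const.sub ((continuous_id.dist continuous_const).div_const r))
    have hφ0 : ∀ y, 0 ≤ φ y := fun y => le_max_left _ _
    have hφ1 : ∀ y, φ y ≤ 1 := by
      intro y
      apply max_le (by norm_num)
      have : 0 ≤ dist y z / r := div_nonneg dist_nonneg hr.le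
      linarith
    have hφvan : ∀ j, N ≤ j → φ (T^[j] x₀) = 0 := by
      intro j hj
      have hmem : T^[j] x₀ ∈ closure ((fun n => T^[n] x₀) '' Set.Ici N) :=
        subset_closure ⟨j, hj, rfl⟩
      have hdist : ¬ dist (T^[j] x₀) z < r := by
        intro hlt
        exact hball hlt hmem
      have : (1 : ℝ) - dist (T^[j] x₀) z / r ≤ 0 := by
        rw [sub_nonpos, le_div_iff₀ hr]
        linarith [not_lt.1 hdist]
      simp [hφdef, max_eq_left this]
    obtain ⟨n, hn, hconv⟩ := hx₀ μ hμK
    have hto0 : Tendsto (fun k => birkhoffAvg T φ x₀ (n k)) atTop (𝓝 0) := by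
      have hub : ∀ m : ℕ, birkhoffAvg T φ x₀ m ≤ (N : ℝ) / m := by
        intro m
        rcases Nat.eq_zero_or_pos m with h | h
        · simp [birkhoffAvg, h]
        · rw [birkhoffAvg, div_le_div_iff_of_pos_right (by exact_mod_cast h)]
          calc ∑ j ∈ Finset.range m, φ (T^[j] x₀)
              ≤ ∑ j ∈ Finset.range m, (if j < N then (1 : ℝ) else 0) := by
                apply Finset.sum_le_sum
                intro j _
                by_cases hj : j < N
                · simp [hj, hφ1]
                · simp [hj, hφvan j (not_lt.1 hj)]
            _ = (((Finset.range m).filter (fun j => j < N)).card : ℝ) := by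
                simp [Finset.sum_boole]
            _ ≤ N := by
                have hss : (Finset.range m).filter (fun j => j < N) ⊆ Finset.range N :=
                  fun j hj => Finset.mem_range.2 (Finset.mem_filter.1 hj).2
                exact_mod_cast (Finset.card_le_card hss).trans_eq (Finset.card_range N)
      have hlb : ∀ k, 0 ≤ birkhoffAvg T φ x₀ (n k) := fun k =>
        div_nonneg (Finset.sum_nonneg fun j _ => hφ0 _) (Nat.cast_nonneg _)
      refine squeeze_zero hlb (fun k => hub (n k)) ?_
      exact (tendsto_const_div_atTop_nhds_zero_nat (N : ℝ)).comp hn.tendsto_atTop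
    have hint0 : ∫ y, φ y ∂(μ : Measure X) = 0 :=
      tendsto_nhds_unique (hconv φ hφc) hto0
    have hinteg : Integrable φ (μ : Measure X) := by
      apply hφc.integrable_of_hasCompactSupport
      exact HasCompactSupport.of_compactSpace _
    have hae : φ =ᵐ[(μ : Measure X)] 0 :=
      (integral_eq_zero_iff_of_nonneg hφ0 hinteg).1 hint0
    have hnull : (μ : Measure X) {y | φ y ≠ 0} = 0 := by
      have := hae
      rw [Filter.EventuallyEq, ae_iff] at this
      simpa using this
    have hpos : 0 < (μ : Measure X) (ball z r) :=
      hzs (ball z r) (mem_ball_self hr) isOpen_ball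
    have hsub : ball z r ⊆ {y | φ y ≠ 0} := by
      intro y hy
      have : 0 < 1 - dist y z / r := by
        rw [sub_pos, div_lt_one hr]
        exact mem_ball.1 hy
      simp only [mem_setOf_eq, hφdef]
      rw [max_eq_right this.le]
      exact ne_of_gt this
    exact absurd (measure_mono_null hsub hnull) hpos.ne'
  · -- omega-limit set in closure of points generating K
    have horb : ∀ m : ℕ, ∀ μ ∈ K, memVT T (T^[m] x₀) μ := by
      intro m
      induction m with
      | zero => simpa using hx₀
      | succ m ih =>
        intro μ hμ
        rw [Function.iterate_succ_apply']
        exact memVT_shift (ih μ hμ)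
    intro y hy
    have hy0 : y ∈ closure ((fun n => T^[n] x₀) '' Set.Ici (0 : ℕ)) := by
      simp only [omegaLimitSet, mem_iInter] at hy
      exact hy 0
    refine closure_mono ?_ hy0
    rintro _ ⟨m, -, rfl⟩
    exact horb m
end

section
/- Let (X,d) be a compact metric space without isolated points and T: X → X a continuous map. If the measure center of T equals X and there exists a point x₀ with V_T(x₀) equal to the full space of T-invariant probability measures, then T is transitive and the set {x ∈ X : V_T(x) = P_T(X)} is Baire generic (residual) in X. -/
open Filter Topology MeasureTheory Metric Set TopologicalSpace

open scoped ENNReal NNReal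

section AuxLemmas

lemma real_shift_aux (a b A : ℝ) (k n : ℕ) (hn : 1 ≤ n)
    (ha : |a| ≤ ((k:ℝ)+n)*A) (hb : |b| ≤ (k:ℝ)*A) :
    |(a - b)/(n:ℝ) - a/((n:ℝ)+(k:ℝ))| ≤ 2*(k:ℝ)*A/(n:ℝ) := by
  have hn' : (0:ℝ) < n := by exact_mod_cast hn
  have hnk : (0:ℝ) < (n:ℝ) + k := by positivity
  have hA : 0 ≤ A := by
    by_contra h
    push_neg at h
    nlinarith [abs_nonneg a]
  have h1 : (a - b)/(n:ℝ) - a/((n:ℝ)+(k:ℝ)) = ((k:ℝ)*a - ((n:ℝ)+(k:ℝ))*b)/((n:ℝ)*((n:ℝ)+(k:ℝ))) := by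
    field_simp; ring
  rw [h1, abs_div, abs_of_pos (mul_pos hn' hnk), div_le_div_iff₀ (mul_pos hn' hnk) hn']
  have hk0 : (0:ℝ) ≤ (k:ℝ) := by positivity
  have h2 : |(k:ℝ)*a - ((n:ℝ)+(k:ℝ))*b| ≤ (k:ℝ)*(((k:ℝ)+n)*A) + ((n:ℝ)+(k:ℝ))*((k:ℝ)*A) := by
    calc |(k:ℝ)*a - ((n:ℝ)+(k:ℝ))*b| ≤ |(k:ℝ)*a| + |((n:ℝ)+(k:ℝ))*b| := abs_sub _ _
      _ = (k:ℝ)*|a| + ((n:ℝ)+(k:ℝ))*|b| := by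
          rw [abs_mul, abs_mul, abs_of_nonneg hk0, abs_of_pos hnk]
      _ ≤ (k:ℝ)*(((k:ℝ)+n)*A) + ((n:ℝ)+(k:ℝ))*((k:ℝ)*A) := by
          gcongr
  calc |(k:ℝ)*a - ((n:ℝ)+(k:ℝ))*b| * (n:ℝ)
      ≤ ((k:ℝ)*(((k:ℝ)+n)*A) + ((n:ℝ)+(k:ℝ))*((k:ℝ)*A)) * (n:ℝ) := by
        exact mul_le_mul_of_nonneg_right h2 (le_of_lt hn')
    _ = 2*(k:ℝ)*A*((n:ℝ)*((n:ℝ)+(k:ℝ))) := by ring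

variable {X : Type*} [MetricSpace X] [CompactSpace X] {T : X → X}

omit [CompactSpace X] in
lemma birkhoff_continuous (hT : Continuous T) (φ : C(X, ℝ)) (n : ℕ) :
    Continuous (fun x => birkhoffAvg T φ x n) := by
  unfold birkhoffAvg
  exact (continuous_finset_sum _ fun j _ => φ.continuous.comp (hT.iterate j)).div_const _

lemma abs_sum_le (φ : C(X, ℝ)) (x : X) (n : ℕ) :
    |∑ j ∈ Finset.range n, φ (T^[j] x)| ≤ n * ‖φ‖ := by
  calc |∑ j ∈ Finset.range n, φ (T^[j] x)| ≤ ∑ j ∈ Finset.range n, |φ (T^[j] x)| :=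
        Finset.abs_sum_le_sum_abs _ _
    _ ≤ ∑ j ∈ Finset.range n, ‖φ‖ := Finset.sum_le_sum fun j _ => φ.norm_coe_le_norm _
    _ = n * ‖φ‖ := by simp [mul_comm]

lemma birkhoff_abs_le (φ : C(X, ℝ)) (x : X) (n : ℕ) :
    |birkhoffAvg T φ x n| ≤ ‖φ‖ := by
  rcases Nat.eq_zero_or_pos n with h | h
  · simp [birkhoffAvg, h, norm_nonneg]
  · rw [birkhoffAvg, abs_div, abs_of_nonneg (by positivity : (0:ℝ) ≤ (n:ℝ)),
      div_le_iff₀ (by positivity)]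
    calc |∑ j ∈ Finset.range n, φ (T^[j] x)| ≤ n * ‖φ‖ := abs_sum_le φ x n
      _ = ‖φ‖ * n := mul_comm _ _

lemma birkhoff_diff_le (φ ψ : C(X, ℝ)) (x : X) (n : ℕ) :
    |birkhoffAvg T (⇑φ) x n - birkhoffAvg T (⇑ψ) x n| ≤ ‖φ - ψ‖ := by
  have : birkhoffAvg T (⇑φ) x n - birkhoffAvg T (⇑ψ) x n = birkhoffAvg T (⇑(φ - ψ)) x n := by
    simp only [birkhoffAvg, ContinuousMap.sub_apply, ContinuousMap.coe_sub, Pi.sub_apply,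
      Finset.sum_sub_distrib, sub_div]
  rw [this]
  exact birkhoff_abs_le (φ - ψ) x n

lemma birkhoff_shift (φ : C(X, ℝ)) (x : X) (k n : ℕ) (hn : 1 ≤ n) :
    |birkhoffAvg T (⇑φ) (T^[k] x) n - birkhoffAvg T (⇑φ) x (n + k)| ≤ 2*(k:ℝ)*‖φ‖/(n:ℝ) := by
  have hsum : ∑ j ∈ Finset.range n, φ (T^[j] (T^[k] x))
      = (∑ j ∈ Finset.range (k + n), φ (T^[j] x)) - ∑ j ∈ Finset.range k, φ (T^[j] x) := by
    rw [Finset.sum_range_add]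
    simp only [add_sub_cancel_left]
    refine Finset.sum_congr rfl fun j _ => ?_
    rw [Nat.add_comm k j, Function.iterate_add_apply]
  have h1 : birkhoffAvg T (⇑φ) (T^[k] x) n
      = ((∑ j ∈ Finset.range (k + n), φ (T^[j] x)) - ∑ j ∈ Finset.range k, φ (T^[j] x)) / (n:ℝ) := by
    rw [birkhoffAvg, hsum]
  have h2 : birkhoffAvg T (⇑φ) x (n + k)
      = (∑ j ∈ Finset.range (k + n), φ (T^[j] x)) / ((n:ℝ) + (k:ℝ)) := by
    rw [birkhoffAvg, Nat.add_comm n k]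
    push_cast
    ring_nf
  rw [h1, h2]
  refine real_shift_aux _ _ _ k n hn ?_ ?_
  · have := abs_sum_le (T := T) φ x (k + n)
    calc |∑ j ∈ Finset.range (k + n), φ (T^[j] x)| ≤ ((k+n : ℕ):ℝ) * ‖φ‖ := this
      _ = ((k:ℝ) + (n:ℝ)) * ‖φ‖ := by push_cast; ring
  · exact abs_sum_le (T := T) φ x k

end AuxLemmas

section InvLemma
variable {X : Type*} [MetricSpace X] [CompactSpace X] [MeasurableSpace X] [BorelSpace X] {T : X → X}

omit [CompactSpace X] [MeasurableSpace X] [BorelSpace X] in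
lemma norm_coe_le {φ : C(X,ℝ)} [CompactSpace X] (y : X) : |φ y| ≤ ‖φ‖ := φ.norm_coe_le_norm y

lemma invariant_of_memVT (hT : Continuous T) {x : X} {μ : ProbabilityMeasure X}
    (h : memVT T x μ) : InvariantProb T μ := by
  obtain ⟨n, hmono, hconv⟩ := h
  have hμp : IsProbabilityMeasure (μ : Measure X) := μ.2
  have key : ∀ φ : C(X,ℝ), ∫ y, φ (T y) ∂(μ : Measure X) = ∫ y, φ y ∂(μ : Measure X) := by
    intro φ
    have hb := hconv (fun y => φ (T y)) (φ.continuous.comp hT)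
    have ha := hconv (⇑φ) φ.continuous
    have hid : ∀ m : ℕ, birkhoffAvg T (fun y => φ (T y)) x m - birkhoffAvg T (⇑φ) x m
        = (φ (T^[m] x) - φ x) / m := by
      intro m
      have : ∑ j ∈ Finset.range m, φ (T (T^[j] x))
          = (∑ j ∈ Finset.range m, φ (T^[j] x)) + φ (T^[m] x) - φ x := by
        have e1 : ∀ j, φ (T (T^[j] x)) = φ (T^[j+1] x) := fun j => by
          rw [Function.iterate_succ_apply']
        simp_rw [e1]
        have := Finset.sum_range_succ' (fun j => φ (T^[j] x)) m
        have e2 : ∑ j ∈ Finset.range (m+1), φ (T^[j] x)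
            = (∑ j ∈ Finset.range m, φ (T^[j] x)) + φ (T^[m] x) :=
          Finset.sum_range_succ _ m
        rw [e2] at this
        simp only [Function.iterate_zero, id_eq] at this
        linarith
      rw [birkhoffAvg, birkhoffAvg, this]
      ring
    have hzero : Tendsto (fun k => birkhoffAvg T (fun y => φ (T y)) x (n k)
        - birkhoffAvg T (⇑φ) x (n k)) atTop (𝓝 0) := by
      apply squeeze_zero_norm (a := fun k => 2*‖φ‖/(n k : ℝ))
      · intro k
        rw [hid]
        rcases Nat.eq_zero_or_pos (n k) with h0 | h0
        · simp [h0]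
        · rw [Real.norm_eq_abs, abs_div, abs_of_pos (by exact_mod_cast h0 : (0:ℝ) < (n k : ℝ)),
            div_le_div_iff₀ (by exact_mod_cast h0) (by exact_mod_cast h0)]
          have := abs_sub (φ (T^[n k] x)) (φ x)
          have b1 := norm_coe_le (φ := φ) (T^[n k] x)
          have b2 := norm_coe_le (φ := φ) x
          nlinarith [(by exact_mod_cast h0 : (0:ℝ) < (n k : ℝ))]
      · have h1 : Tendsto (fun m : ℕ => 2*‖φ‖/(m:ℝ)) atTop (𝓝 0) :=
          tendsto_const_div_atTop_nhds_zero_nat _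
        exact h1.comp hmono.tendsto_atTop
    have := hb.sub ha
    have h2 : Tendsto (fun k => birkhoffAvg T (fun y => φ (T y)) x (n k)
        - birkhoffAvg T (⇑φ) x (n k)) atTop
        (𝓝 ((∫ y, φ (T y) ∂(μ : Measure X)) - ∫ y, φ y ∂(μ : Measure X))) := this
    have := tendsto_nhds_unique h2 hzero
    linarith
  have hmap : IsProbabilityMeasure ((μ : Measure X).map T) :=
    Measure.isProbabilityMeasure_map hT.aemeasurable
  refine ext_of_forall_lintegral_eq_of_IsFiniteMeasure fun f => ?_
  have hφc : Continuous fun y => (f y : ℝ) := NNReal.continuous_coe.comp f.continuous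
  have hint : ∫ y, (f y : ℝ) ∂((μ : Measure X).map T) = ∫ y, (f (T y) : ℝ) ∂(μ : Measure X) :=
    integral_map hT.aemeasurable hφc.aestronglyMeasurable
  have hkey := key ⟨fun y => (f y : ℝ), hφc⟩
  simp only [ContinuousMap.coe_mk] at hkey
  have e1 := BoundedContinuousFunction.toReal_lintegral_coe_eq_integral f ((μ : Measure X).map T)
  have e2 := BoundedContinuousFunction.toReal_lintegral_coe_eq_integral f (μ : Measure X)
  have efin1 : ∫⁻ y, (f y : ℝ≥0∞) ∂((μ : Measure X).map T) ≠ ⊤ :=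
    (BoundedContinuousFunction.lintegral_lt_top_of_nnreal _ f).ne
  have efin2 : ∫⁻ y, (f y : ℝ≥0∞) ∂(μ : Measure X) ≠ ⊤ :=
    (BoundedContinuousFunction.lintegral_lt_top_of_nnreal _ f).ne
  rw [← ENNReal.toReal_eq_toReal_iff' efin1 efin2, e1, e2, hint, hkey]

lemma exists_orbit_in_open (hMC : measureCenter T = Set.univ) (x₀ : X)
    (hVT : ∀ μ : ProbabilityMeasure X, InvariantProb T μ → memVT T x₀ μ)
    {U : Set X} (hU : IsOpen U) (hUne : U.Nonempty) : ∃ j : ℕ, T^[j] x₀ ∈ U := by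
  obtain ⟨u, hu⟩ := hUne
  have hu' : u ∈ measureCenter T := by rw [hMC]; trivial
  rw [measureCenter, _root_.mem_closure_iff] at hu'
  obtain ⟨y, hyU, hy'⟩ := hu' U hU hu
  simp only [mem_iUnion, mem_setOf_eq] at hy'
  obtain ⟨μ, hμinv, hy⟩ := hy'
  obtain ⟨r, hr, hball⟩ := (Metric.isOpen_iff.mp hU) y hyU
  have hμp : IsProbabilityMeasure (μ : Measure X) := μ.2
  set φ : X → ℝ := fun z => max (1 - dist z y / r) 0 with hφdef
  have hφc : Continuous φ :=
    ((continuous_const.sub ((continuous_id.dist continuous_const).div_const r)).max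
      continuous_const)
  have hφ0 : ∀ z, 0 ≤ φ z := fun z => le_max_right _ _
  have hφpos_imp : ∀ z, 0 < φ z → z ∈ U := by
    intro z hz
    apply hball
    simp only [hφdef] at hz
    rcases le_or_gt (1 - dist z y / r) 0 with h | h
    · rw [max_eq_right h] at hz; exact absurd hz (lt_irrefl 0)
    · have : dist z y / r < 1 := by linarith
      rw [div_lt_one hr] at this
      exact this
  have hφhalf : ∀ z ∈ ball y (r/2), (1:ℝ)/2 ≤ φ z := by
    intro z hz
    rw [mem_ball] at hz
    have : dist z y / r < 1/2 := by rw [div_lt_iff₀ hr]; linarith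
    have h2 : (1:ℝ)/2 ≤ 1 - dist z y / r := by linarith
    exact le_trans h2 (le_max_left _ _)
  have hμb : 0 < (μ : Measure X) (ball y (r/2)) :=
    hy _ (mem_ball_self (by positivity)) isOpen_ball
  have hφint : Integrable φ (μ : Measure X) := by
    have := (BoundedContinuousFunction.mkOfCompact ⟨φ, hφc⟩).integrable (μ : Measure X)
    exact this
  have hIpos : 0 < ∫ z, φ z ∂(μ : Measure X) := by
    have hind : Integrable ((ball y (r/2)).indicator fun _ => (1:ℝ)/2) (μ : Measure X) :=
      (integrable_const ((1:ℝ)/2)).indicator measurableSet_ball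
    have hle : ∀ z, ((ball y (r/2)).indicator fun _ => (1:ℝ)/2) z ≤ φ z := by
      intro z
      by_cases hz : z ∈ ball y (r/2)
      · rw [indicator_of_mem hz]; exact hφhalf z hz
      · rw [indicator_of_notMem hz]; exact hφ0 z
    have h1 : ∫ z, ((ball y (r/2)).indicator fun _ => (1:ℝ)/2) z ∂(μ : Measure X)
        ≤ ∫ z, φ z ∂(μ : Measure X) := integral_mono hind hφint hle
    have h2 : ∫ z, ((ball y (r/2)).indicator fun _ => (1:ℝ)/2) z ∂(μ : Measure X)
        = ((μ : Measure X) (ball y (r/2))).toReal • ((1:ℝ)/2) :=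
      integral_indicator_const _ measurableSet_ball
    have h3 : 0 < ((μ : Measure X) (ball y (r/2))).toReal :=
      ENNReal.toReal_pos hμb.ne' (measure_ne_top _ _)
    rw [h2] at h1
    have : 0 < ((μ : Measure X) (ball y (r/2))).toReal • ((1:ℝ)/2) := by
      rw [smul_eq_mul]; positivity
    linarith
  obtain ⟨n, hmono, hconv⟩ := hVT μ hμinv
  have := hconv φ hφc
  obtain ⟨k, hk⟩ := (this.eventually (eventually_gt_nhds hIpos)).exists
  have hsum : 0 < ∑ j ∈ Finset.range (n k), φ (T^[j] x₀) := by
    by_contra h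
    push_neg at h
    have : birkhoffAvg T φ x₀ (n k) ≤ 0 := div_nonpos_of_nonpos_of_nonneg h (Nat.cast_nonneg _)
    linarith
  have : ∑ j ∈ Finset.range (n k), (0:ℝ) < ∑ j ∈ Finset.range (n k), φ (T^[j] x₀) := by
    simpa using hsum
  obtain ⟨j, _, hj⟩ := Finset.exists_lt_of_sum_lt this
  exact ⟨j, hφpos_imp _ hj⟩

end InvLemma

section TransLemma

lemma open_diff_finite_nonempty {X : Type*} [MetricSpace X] (hX : NoIsolatedPoints X)
    {V F : Set X} (hV : IsOpen V) (hVne : V.Nonempty) (hF : F.Finite) :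
    (V \ F).Nonempty := by
  obtain ⟨v, hv⟩ := hVne
  have h1 : IsOpen (V ∩ (F \ {v})ᶜ) := hV.inter (Set.Finite.diff hF : (F \ {v}).Finite).isClosed.isOpen_compl
  have h2 : v ∈ V ∩ (F \ {v})ᶜ := ⟨hv, fun h => h.2 rfl⟩
  have h3 : {v}ᶜ ∩ (V ∩ (F \ {v})ᶜ) ∈ 𝓝[≠] v :=
    inter_mem_nhdsWithin _ (h1.mem_nhds h2)
  haveI := hX v
  obtain ⟨w, hw⟩ := Filter.nonempty_of_mem h3
  refine ⟨w, hw.2.1, fun hwF => ?_⟩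
  exact hw.2.2 ⟨hwF, hw.1⟩

lemma transitive_of_dense_orbit {X : Type*} [MetricSpace X] (hX : NoIsolatedPoints X)
    {T : X → X} (x₀ : X)
    (hden : ∀ U : Set X, IsOpen U → U.Nonempty → ∃ j : ℕ, T^[j] x₀ ∈ U) :
    TopTransitive T := by
  intro U V hU hV hUne hVne
  obtain ⟨a, ha⟩ := hden U hU hUne
  set F : Set X := (fun j => T^[j] x₀) '' (Set.Iic a) with hF
  have hFfin : F.Finite := (Set.finite_Iic a).image _
  obtain ⟨w, hw⟩ := open_diff_finite_nonempty hX hV hVne hFfin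
  obtain ⟨b, hb1, hb2⟩ := hden (V ∩ Fᶜ) (hV.inter hFfin.isClosed.isOpen_compl) ⟨w, hw.1, hw.2⟩
  have hab : a < b := by
    by_contra h
    push_neg at h
    exact hb2 ⟨b, h, rfl⟩
  refine ⟨b - a, ⟨T^[a] x₀, ha, ?_⟩⟩
  have : T^[b - a] (T^[a] x₀) = T^[b] x₀ := by
    rw [← Function.iterate_add_apply, Nat.sub_add_cancel hab.le]
  simpa [this] using hb1

end TransLemma

section ResLemma
variable {X : Type*} [MetricSpace X] [CompactSpace X] [MeasurableSpace X] [BorelSpace X] {T : X → X}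

lemma integral_diff_abs_le (μ : ProbabilityMeasure X) (φ ψ : C(X, ℝ)) :
    |(∫ y, φ y ∂(μ : Measure X)) - ∫ y, ψ y ∂(μ : Measure X)| ≤ ‖φ - ψ‖ := by
  have hμp : IsProbabilityMeasure (μ : Measure X) := μ.2
  have hint : ∀ χ : C(X,ℝ), Integrable (⇑χ) (μ : Measure X) := fun χ => by
    exact (BoundedContinuousFunction.mkOfCompact χ).integrable (μ : Measure X)
  have h1 : (∫ y, φ y ∂(μ : Measure X)) - ∫ y, ψ y ∂(μ : Measure X)
      = ∫ y, (φ - ψ) y ∂(μ : Measure X) := by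
    rw [← integral_sub (hint φ) (hint ψ)]
    simp
  rw [h1]
  have h2 := BoundedContinuousFunction.norm_integral_le_norm (μ : Measure X)
    (BoundedContinuousFunction.mkOfCompact (φ - ψ))
  rw [← BoundedContinuousFunction.norm_mkOfCompact]
  simpa using h2

lemma residual_main (hT : Continuous T) (x₀ : X)
    (hinv : ∀ μ : ProbabilityMeasure X, InvariantProb T μ → memVT T x₀ μ)
    (hmem : ∀ (x : X) (μ : ProbabilityMeasure X), memVT T x μ → InvariantProb T μ)
    (hden : ∀ U : Set X, IsOpen U → U.Nonempty → ∃ j : ℕ, T^[j] x₀ ∈ U) :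
    {x : X | {μ : ProbabilityMeasure X | memVT T x μ} =
      {μ : ProbabilityMeasure X | InvariantProb T μ}} ∈ residual X := by
  classical
  obtain ⟨D, hDc, hDd⟩ := TopologicalSpace.exists_countable_dense C(X, ℝ)
  have hDne : D.Nonempty := hDd.nonempty
  obtain ⟨φseq, hφseq⟩ := hDc.exists_eq_range hDne
  have hdense : DenseRange φseq := by rw [hφseq] at hDd; exact hDd
  -- index type
  set ι := (Σ m : ℕ, (Fin (m+1) → ℚ)) × ℕ with hι
  set Good : (Σ m : ℕ, (Fin (m+1) → ℚ)) → Prop := fun σ =>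
    ∃ μ : ProbabilityMeasure X, InvariantProb T μ ∧
      ∀ i : Fin (σ.1+1), |(∫ y, φseq i y ∂(μ : Measure X)) - (σ.2 i : ℝ)| < 1/(2*((σ.1:ℝ)+1))
    with hGood
  set A : ι → Set X := fun p =>
    if Good p.1 then
      {x | ∃ n, p.2 ≤ n ∧ ∀ i : Fin (p.1.1+1),
        |birkhoffAvg T (φseq i) x n - (p.1.2 i : ℝ)| < 1/((p.1.1:ℝ)+1)}
    else Set.univ
    with hA
  have hres : ∀ p : ι, A p ∈ residual X := by
    intro p
    simp only [hA]
    by_cases hg : Good p.1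
    · rw [if_pos hg]
      obtain ⟨⟨m, v⟩, N⟩ := p
      obtain ⟨μ, hμinv, hμv⟩ := hg
      have hopen : IsOpen {x : X | ∃ n, N ≤ n ∧ ∀ i : Fin (m+1),
          |birkhoffAvg T (φseq i) x n - (v i : ℝ)| < 1/((m:ℝ)+1)} := by
        have : {x : X | ∃ n, N ≤ n ∧ ∀ i : Fin (m+1),
            |birkhoffAvg T (φseq i) x n - (v i : ℝ)| < 1/((m:ℝ)+1)}
            = ⋃ n, ⋃ (_ : N ≤ n), ⋂ i : Fin (m+1),
              (fun x => |birkhoffAvg T (φseq i) x n - (v i : ℝ)|) ⁻¹' (Iio (1/((m:ℝ)+1))) := by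
          ext x
          simp only [mem_setOf_eq, mem_iUnion, mem_iInter, mem_preimage, mem_Iio,
            exists_prop]
        rw [this]
        refine isOpen_iUnion fun n => isOpen_iUnion fun _ => isOpen_iInter_of_finite fun i => ?_
        exact (((birkhoff_continuous hT (φseq i) n).sub continuous_const).abs).isOpen_preimage
          _ isOpen_Iio
      have hdns : Dense {x : X | ∃ n, N ≤ n ∧ ∀ i : Fin (m+1),
          |birkhoffAvg T (φseq i) x n - (v i : ℝ)| < 1/((m:ℝ)+1)} := by
        rw [dense_iff_inter_open]
        intro U hU hUne
        obtain ⟨k, hk⟩ := hden U hU hUne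
        obtain ⟨nseq, hmono, hconv⟩ := hinv μ hμinv
        set δ : ℝ := 1/(4*((m:ℝ)+1)) with hδ
        have hδpos : 0 < δ := by positivity
        set C : ℝ := 1 + ∑ i : Fin (m+1), ‖φseq i‖ with hC
        have hCpos : 0 < C := by positivity
        have hCub : ∀ i : Fin (m+1), ‖φseq i‖ ≤ C := by
          intro i
          have h1 : ‖φseq i‖ ≤ ∑ i : Fin (m+1), ‖φseq i‖ :=
            Finset.single_le_sum (f := fun j : Fin (m+1) => ‖φseq (j:ℕ)‖)
              (fun j _ => norm_nonneg _) (Finset.mem_univ i)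
          linarith
        obtain ⟨M₀, hM₀⟩ := exists_nat_gt (2*(k:ℝ)*C/δ)
        set M := M₀ + 1 with hM
        have hMpos : (0:ℝ) < M := by positivity
        have hMlt : 2*(k:ℝ)*C/(M:ℝ) < δ := by
          rw [div_lt_iff₀ hMpos]
          have h2 : 2*(k:ℝ)*C/δ < M := by
            push_cast [hM]; push_cast at hM₀; linarith
          rw [div_lt_iff₀ hδpos] at h2
          linarith
        -- eventually conditions
        have E1 : ∀ᶠ t in atTop, ∀ i : Fin (m+1),
            |birkhoffAvg T (φseq i) x₀ (nseq t) - ∫ y, φseq i y ∂(μ : Measure X)| < δ := by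
          rw [eventually_all]
          intro i
          have := hconv (φseq i) (φseq i).continuous
          have h2 : {y : ℝ | dist y (∫ y, φseq i y ∂(μ : Measure X)) < δ}
              ∈ 𝓝 (∫ y, φseq i y ∂(μ : Measure X)) := Metric.ball_mem_nhds _ hδpos
          filter_upwards [this.eventually_mem h2] with t ht
          rwa [Real.dist_eq] at ht
        have E2 : ∀ᶠ t in atTop, k + N + 1 ≤ nseq t := by
          filter_upwards [eventually_ge_atTop (k + N + 1)] with t ht
          exact le_trans ht hmono.le_apply
        have E3 : ∀ᶠ t in atTop, k + M ≤ nseq t := by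
          filter_upwards [eventually_ge_atTop (k + M)] with t ht
          exact le_trans ht hmono.le_apply
        obtain ⟨t, h1, h2, h3⟩ := (E1.and (E2.and E3)).exists
        set n := nseq t - k with hn
        have hkn : n + k = nseq t := Nat.sub_add_cancel (by omega)
        have hn1 : 1 ≤ n := by omega
        have hnN : N ≤ n := by omega
        have hnM : M ≤ n := by omega
        refine ⟨T^[k] x₀, hk, ⟨n, hnN, fun i => ?_⟩⟩
        have b1 : |birkhoffAvg T (φseq i) (T^[k] x₀) n - birkhoffAvg T (φseq i) x₀ (n + k)|
            ≤ 2*(k:ℝ)*‖φseq i‖/(n:ℝ) := birkhoff_shift (φseq i) x₀ k n hn1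
        have b1' : 2*(k:ℝ)*‖φseq i‖/(n:ℝ) < δ := by
          have hnn : (0:ℝ) < (n:ℝ) := by exact_mod_cast hn1
          calc 2*(k:ℝ)*‖φseq i‖/(n:ℝ) ≤ 2*(k:ℝ)*C/(n:ℝ) := by
                gcongr <;> first | positivity | exact hCub i
            _ ≤ 2*(k:ℝ)*C/(M:ℝ) := by
                gcongr <;> first | positivity | exact_mod_cast hnM
            _ < δ := hMlt
        have b2 : |birkhoffAvg T (φseq i) x₀ (n + k) - ∫ y, φseq i y ∂(μ : Measure X)| < δ := by
          rw [hkn]; exact h1 i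
        have b3 : |(∫ y, φseq i y ∂(μ : Measure X)) - (v i : ℝ)| < 1/(2*((m:ℝ)+1)) := hμv i
        have harith : δ + δ + 1/(2*((m:ℝ)+1)) = 1/((m:ℝ)+1) := by
          rw [hδ]
          have : ((m:ℝ)+1) ≠ 0 := by positivity
          field_simp
          ring
        calc |birkhoffAvg T (φseq i) (T^[k] x₀) n - (v i : ℝ)|
            ≤ |birkhoffAvg T (φseq i) (T^[k] x₀) n - birkhoffAvg T (φseq i) x₀ (n + k)|
              + |birkhoffAvg T (φseq i) x₀ (n + k) - ∫ y, φseq i y ∂(μ : Measure X)|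
              + |(∫ y, φseq i y ∂(μ : Measure X)) - (v i : ℝ)| := by
              have := abs_sub_le (birkhoffAvg T (φseq i) (T^[k] x₀) n)
                (birkhoffAvg T (φseq i) x₀ (n + k)) (v i : ℝ)
              have h4 := abs_sub_le (birkhoffAvg T (φseq i) x₀ (n + k))
                (∫ y, φseq i y ∂(μ : Measure X)) (v i : ℝ)
              linarith
          _ < δ + δ + 1/(2*((m:ℝ)+1)) := by
              have := lt_of_le_of_lt b1 b1'
              linarith
          _ = 1/((m:ℝ)+1) := harith
      exact mem_residual.mpr ⟨_, subset_rfl, hopen.isGδ, hdns⟩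
    · rw [if_neg hg]; exact Filter.univ_mem
  refine Filter.mem_of_superset ((countable_iInter_mem).mpr hres) ?_
  intro x hx
  simp only [mem_iInter] at hx
  simp only [mem_setOf_eq]
  apply Set.Subset.antisymm
  · exact fun μ h => hmem x μ h
  · intro μ hμ
    simp only [mem_setOf_eq] at hμ ⊢
    -- key approximation property
    have key : ∀ m N : ℕ, ∃ n, N ≤ n ∧ ∀ i : Fin (m+1),
        |birkhoffAvg T (φseq i) x n - ∫ y, φseq i y ∂(μ : Measure X)| < 2/((m:ℝ)+1) := by
      intro m N
      have hhalf : (0:ℝ) < 1/(2*((m:ℝ)+1)) := by positivity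
      have hv := fun i : Fin (m+1) => exists_rat_near (∫ y, φseq i y ∂(μ : Measure X)) hhalf
      choose v hv using hv
      have hGoodσ : Good ⟨m, v⟩ := ⟨μ, hμ, fun i => hv i⟩
      have hxA := hx (⟨⟨m, v⟩, N⟩ : ι)
      simp only [hA] at hxA
      rw [if_pos hGoodσ] at hxA
      obtain ⟨n, hnN, hcl⟩ := hxA
      refine ⟨n, hnN, fun i => ?_⟩
      have h1 := hcl i
      have h2 := hv i
      have h3 : |birkhoffAvg T (φseq i) x n - ∫ y, φseq i y ∂(μ : Measure X)|
          ≤ |birkhoffAvg T (φseq i) x n - (v i : ℝ)|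
            + |(∫ y, φseq i y ∂(μ : Measure X)) - (v i : ℝ)| := by
        have := abs_sub_le (birkhoffAvg T (φseq i) x n) ((v i : ℝ))
          (∫ y, φseq i y ∂(μ : Measure X))
        rw [abs_sub_comm ((v i : ℝ))] at this
        linarith
      have harith : 1/((m:ℝ)+1) + 1/(2*((m:ℝ)+1)) ≤ 2/((m:ℝ)+1) := by
        have h0 : (0:ℝ) < (m:ℝ)+1 := by positivity
        rw [div_add_div _ _ (by positivity) (by positivity), div_le_div_iff₀ (by positivity) h0]
        ring_nf
        nlinarith
      linarith
    -- build strictly monotone sequence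
    obtain ⟨g, hg0, hgs⟩ : ∃ g : ℕ → ℕ, (g 0 = (key 0 1).choose ∧
        ∀ m, g (m+1) = (key (m+1) (g m + 1)).choose) :=
      ⟨fun m => Nat.rec (key 0 1).choose (fun m ih => (key (m+1) (ih+1)).choose) m,
        rfl, fun m => rfl⟩
    have hgmono : StrictMono g := by
      apply strictMono_nat_of_lt_succ
      intro m
      rw [hgs m]
      have := (key (m+1) (g m + 1)).choose_spec.1
      omega
    have hgprop : ∀ m, ∀ i : Fin (m+1),
        |birkhoffAvg T (φseq i) x (g m) - ∫ y, φseq i y ∂(μ : Measure X)| < 2/((m:ℝ)+1) := by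
      intro m
      cases m with
      | zero => rw [hg0]; exact (key 0 1).choose_spec.2
      | succ m => rw [hgs m]; exact (key (m+1) (g m + 1)).choose_spec.2
    -- convergence for each φseq j
    have hconvj : ∀ j : ℕ, Tendsto (fun m => birkhoffAvg T (φseq j) x (g m)) atTop
        (𝓝 (∫ y, φseq j y ∂(μ : Measure X))) := by
      intro j
      rw [Metric.tendsto_atTop]
      intro ε hε
      obtain ⟨M₁, hM₁⟩ := exists_nat_one_div_lt (half_pos hε)
      refine ⟨max M₁ j, fun m hm => ?_⟩
      have hjm : j < m + 1 := by omega
      have := hgprop m ⟨j, hjm⟩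
      rw [Real.dist_eq]
      have hle : 2/((m:ℝ)+1) ≤ 2/((M₁:ℝ)+1) := by
        gcongr
        have : M₁ ≤ m := le_trans (le_max_left _ _) hm
        exact_mod_cast this
      have h2 : 2/((M₁:ℝ)+1) < ε := by
        rw [div_lt_iff₀ (by positivity)]
        rw [div_lt_iff₀ (by positivity)] at hM₁
        linarith
      calc |birkhoffAvg T (φseq j) x (g m) - ∫ y, φseq j y ∂(μ : Measure X)|
          < 2/((m:ℝ)+1) := this
        _ ≤ 2/((M₁:ℝ)+1) := hle
        _ < ε := h2
    refine ⟨g, hgmono, fun φ hφ => ?_⟩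
    set φc : C(X, ℝ) := ⟨φ, hφ⟩ with hφc
    rw [Metric.tendsto_atTop]
    intro ε hε
    obtain ⟨j, hj⟩ := hdense.exists_dist_lt φc (show (0:ℝ) < ε/3 by positivity)
    rw [dist_eq_norm] at hj
    have hcj := hconvj j
    rw [Metric.tendsto_atTop] at hcj
    obtain ⟨M₂, hM₂⟩ := hcj (ε/3) (by positivity)
    refine ⟨M₂, fun m hm => ?_⟩
    have h1 : |birkhoffAvg T (⇑φc) x (g m) - birkhoffAvg T (⇑(φseq j)) x (g m)| ≤ ‖φc - φseq j‖ :=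
      birkhoff_diff_le φc (φseq j) x (g m)
    have h2 := hM₂ m hm
    rw [Real.dist_eq] at h2
    have h3 : |(∫ y, φseq j y ∂(μ : Measure X)) - ∫ y, φc y ∂(μ : Measure X)|
        ≤ ‖φseq j - φc‖ := integral_diff_abs_le μ (φseq j) φc
    rw [norm_sub_rev] at h3
    rw [Real.dist_eq]
    have hcoe : birkhoffAvg T φ x (g m) = birkhoffAvg T (⇑φc) x (g m) := rfl
    have hcoe2 : (∫ y, φ y ∂(μ : Measure X)) = ∫ y, φc y ∂(μ : Measure X) := rfl
    rw [hcoe, hcoe2]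
    have htri : |birkhoffAvg T (⇑φc) x (g m) - ∫ y, φc y ∂(μ : Measure X)|
        ≤ |birkhoffAvg T (⇑φc) x (g m) - birkhoffAvg T (⇑(φseq j)) x (g m)|
          + |birkhoffAvg T (⇑(φseq j)) x (g m) - ∫ y, φseq j y ∂(μ : Measure X)|
          + |(∫ y, φseq j y ∂(μ : Measure X)) - ∫ y, φc y ∂(μ : Measure X)| := by
      have t1 := abs_sub_le (birkhoffAvg T (⇑φc) x (g m)) (birkhoffAvg T (⇑(φseq j)) x (g m))
        (∫ y, φc y ∂(μ : Measure X))
      have t2 := abs_sub_le (birkhoffAvg T (⇑(φseq j)) x (g m))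
        (∫ y, φseq j y ∂(μ : Measure X)) (∫ y, φc y ∂(μ : Measure X))
      linarith
    linarith


end ResLemma

theorem stmt7 {X : Type*} [MetricSpace X] [CompactSpace X] [MeasurableSpace X] [BorelSpace X]
    (hX : NoIsolatedPoints X) {T : X → X} (hT : Continuous T)
    (hMC : measureCenter T = Set.univ)
    (x₀ : X)
    (hx₀ : {μ : ProbabilityMeasure X | memVT T x₀ μ} =
      {μ : ProbabilityMeasure X | InvariantProb T μ}) :
    TopTransitive T ∧
      {x : X | {μ : ProbabilityMeasure X | memVT T x μ} =
        {μ : ProbabilityMeasure X | InvariantProb T μ}} ∈ residual X := by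
  have hinv : ∀ μ : ProbabilityMeasure X, InvariantProb T μ → memVT T x₀ μ := by
    intro μ h
    have : μ ∈ {μ : ProbabilityMeasure X | InvariantProb T μ} := h
    rw [← hx₀] at this
    exact this
  have hden : ∀ U : Set X, IsOpen U → U.Nonempty → ∃ j : ℕ, T^[j] x₀ ∈ U :=
    fun U hU hne => exists_orbit_in_open hMC x₀ hinv hU hne
  constructor
  · exact transitive_of_dense_orbit hX x₀ hden
  · exact residual_main hT x₀ hinv (fun x μ h => invariant_of_memVT hT h) hden
end

section
/- Let (X,d) be a compact metric space without isolated points, T: X → X a continuous map, and K a nonempty subset of P_T(X). If there exists a dense subset L of K such that {x ∈ X : L ⊆ V_T(x)} is dense in X, then {x ∈ X : K ⊆ V_T(x)} is Baire generic in X. -/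
open Filter Topology MeasureTheory Metric Set TopologicalSpace

open scoped ENNReal NNReal

namespace Stmt8Aux

variable {X : Type*} [MetricSpace X] [CompactSpace X] [MeasurableSpace X] [BorelSpace X]

/-- empirical measure with `n+1` points. -/
noncomputable def emp (T : X → X) (x : X) (n : ℕ) : ProbabilityMeasure X :=
  ⟨((n + 1 : ℝ≥0∞))⁻¹ • ∑ j ∈ Finset.range (n + 1), Measure.dirac (T^[j] x), by
    constructor
    rw [Measure.smul_apply, Measure.finset_sum_apply]
    simp only [measure_univ, Finset.sum_const, Finset.card_range, nsmul_eq_mul, mul_one,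
      smul_eq_mul]
    rw [Nat.cast_add, Nat.cast_one, ENNReal.inv_mul_cancel (by simp) (by simp)]⟩

lemma integral_emp (T : X → X) (x : X) (n : ℕ) {φ : X → ℝ} (hφ : Continuous φ) :
    ∫ y, φ y ∂(emp T x n : Measure X) = birkhoffAvg T φ x (n + 1) := by
  have hint : ∀ j ∈ Finset.range (n + 1), Integrable φ (Measure.dirac (T^[j] x)) := fun j _ =>
    hφ.integrable_of_hasCompactSupport (isClosed_tsupport _).isCompact
  show ∫ y, φ y ∂(((n + 1 : ℝ≥0∞))⁻¹ • _) = _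
  rw [integral_smul_measure, integral_finset_sum_measure hint]
  simp only [integral_dirac]
  rw [birkhoffAvg, div_eq_inv_mul]
  simp only [ENNReal.toReal_inv, smul_eq_mul]
  rw [ENNReal.toReal_add (by simp) (by simp)]
  norm_num

lemma continuous_emp (T : X → X) (hT : Continuous T) (n : ℕ) :
    Continuous fun x => emp T x n := by
  rw [continuous_iff_continuousAt]
  intro x
  apply ProbabilityMeasure.tendsto_iff_forall_integral_tendsto.mpr
  intro f
  simp only [integral_emp T _ _ f.continuous]
  have hc : Continuous fun y => birkhoffAvg T f y (n + 1) := by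
    unfold birkhoffAvg
    exact (continuous_finset_sum _ fun j _ => f.continuous.comp (hT.iterate j)).div_const _
  exact hc.tendsto x

lemma isGdelta_setOf_mapClusterPt (T : X → X) (hT : Continuous T) (μ : ProbabilityMeasure X) :
    IsGδ {x : X | MapClusterPt μ atTop (emp T x)} := by
  letI : MetricSpace (ProbabilityMeasure X) := TopologicalSpace.metrizableSpaceMetric _
  have hset : {x : X | MapClusterPt μ atTop (emp T x)} =
      ⋂ (m : ℕ) (N : ℕ), ⋃ n ∈ Set.Ici N, {x : X | dist (emp T x n) μ < 1 / (m + 1)} := by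
    ext x
    simp only [Set.mem_iInter, Set.mem_iUnion, Set.mem_setOf_eq, Set.mem_Ici]
    constructor
    · intro h m N
      have hfreq := (mapClusterPt_iff_frequently.mp h) (Metric.ball μ (1 / (m + 1)))
        (Metric.ball_mem_nhds μ (by positivity))
      obtain ⟨n, hn, hmem⟩ := (frequently_atTop.mp hfreq) N
      exact ⟨n, hn, Metric.mem_ball.mp hmem⟩
    · intro h
      rw [mapClusterPt_iff_frequently]
      intro s hs
      obtain ⟨ε, hε, hball⟩ := Metric.mem_nhds_iff.mp hs
      obtain ⟨m, hm⟩ := exists_nat_one_div_lt hε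
      rw [frequently_atTop]
      intro N
      obtain ⟨n, hn, hd⟩ := h m N
      exact ⟨n, hn, hball (Metric.mem_ball.mpr (lt_trans hd hm))⟩
  rw [hset]
  refine .iInter fun m => .iInter fun N => IsOpen.isGδ ?_
  refine isOpen_biUnion fun n _ => ?_
  exact isOpen_lt (Continuous.dist (continuous_emp T hT n) continuous_const) continuous_const

lemma secondCountable : SecondCountableTopology (ProbabilityMeasure X) := by
  obtain ⟨u, hu⟩ := TopologicalSpace.exists_dense_seq C(X, ℝ)
  let Φ : ProbabilityMeasure X → (ℕ → ℝ) := fun μ i => ∫ y, u i y ∂(μ : Measure X)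
  have hΦi : ∀ (i : ℕ) (ν : ProbabilityMeasure X),
      Φ ν i = ∫ y, (BoundedContinuousFunction.mkOfCompact (u i)) y ∂(ν : Measure X) := by
    intro i ν; rfl
  have hcont : Continuous Φ := by
    apply continuous_pi
    intro i
    have h2 := ProbabilityMeasure.continuous_integral_boundedContinuousFunction (X := X)
      (BoundedContinuousFunction.mkOfCompact (u i))
    simpa using h2
  have hind : Topology.IsInducing Φ := by
    rw [isInducing_iff_nhds]
    intro μ
    refine le_antisymm (tendsto_iff_comap.mp (hcont.tendsto μ)) ?_
    have htd : Tendsto (fun ν : ProbabilityMeasure X => ν) (comap Φ (𝓝 (Φ μ))) (𝓝 μ) := by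
      rw [ProbabilityMeasure.tendsto_iff_forall_integral_tendsto]
      intro f
      rw [Metric.tendsto_nhds]
      intro ε hε
      obtain ⟨i, hi⟩ := hu.exists_dist_lt f.toContinuousMap (by positivity : (0:ℝ) < ε/4)
      have key : ∀ ν : ProbabilityMeasure X,
          dist (∫ y, f y ∂(ν : Measure X)) (Φ ν i) ≤ ε / 4 := by
        intro ν
        rw [Real.dist_eq, hΦi, ← integral_sub (f.integrable _)
          ((BoundedContinuousFunction.mkOfCompact (u i)).integrable _)]
        calc |∫ y, (f y - u i y) ∂(ν : Measure X)|
            ≤ (ε/4) * ((ν : Measure X) Set.univ).toReal := by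
              rw [← Real.norm_eq_abs]
              apply norm_integral_le_of_norm_le_const
              filter_upwards with y
              calc ‖f y - u i y‖ = dist (f.toContinuousMap y) (u i y) := by
                    rw [dist_eq_norm]; rfl
                _ ≤ dist f.toContinuousMap (u i) := ContinuousMap.dist_apply_le_dist y
                _ ≤ ε/4 := hi.le
          _ = ε/4 := by simp
      have hcoord' : Tendsto ((fun p : ℕ → ℝ => p i) ∘ Φ)
          (comap Φ (𝓝 (Φ μ))) (𝓝 (Φ μ i)) :=
        ((continuous_apply i).tendsto _).comp tendsto_comap
      have hcoord : Tendsto (fun ν : ProbabilityMeasure X => Φ ν i)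
          (comap Φ (𝓝 (Φ μ))) (𝓝 (Φ μ i)) := hcoord'
      have hev := Metric.tendsto_nhds.mp hcoord (ε/4) (by positivity)
      filter_upwards [hev] with ν hν
      have h1 := key ν
      have h2 := key μ
      have h3 : dist (∫ y, f y ∂(ν : Measure X)) (∫ y, f y ∂(μ : Measure X)) ≤
          dist (∫ y, f y ∂(ν : Measure X)) (Φ ν i) + dist (Φ ν i) (Φ μ i)
            + dist (Φ μ i) (∫ y, f y ∂(μ : Measure X)) := dist_triangle4 _ _ _ _
      rw [dist_comm (Φ μ i)] at h3
      linarith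
    exact htd
  exact hind.secondCountableTopology

end Stmt8Aux

namespace Stmt8Aux

variable {X : Type*} [MetricSpace X] [CompactSpace X] [MeasurableSpace X] [BorelSpace X]

lemma tendsto_emp_iff {ι : Type*} {l : Filter ι} (T : X → X) (x : X) (μ : ProbabilityMeasure X)
    (m : ι → ℕ) :
    Tendsto (fun k => emp T x (m k)) l (𝓝 μ) ↔
      ∀ φ : X → ℝ, Continuous φ →
        Tendsto (fun k => birkhoffAvg T φ x (m k + 1)) l (𝓝 (∫ y, φ y ∂(μ : Measure X))) := by
  rw [ProbabilityMeasure.tendsto_iff_forall_integral_tendsto]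
  constructor
  · intro h φ hφ
    have := h (BoundedContinuousFunction.mkOfCompact ⟨φ, hφ⟩)
    simpa only [BoundedContinuousFunction.mkOfCompact_apply, ContinuousMap.coe_mk,
      integral_emp T x _ hφ] using this
  · intro h f
    have := h f f.continuous
    simpa only [integral_emp T x _ f.continuous] using this

lemma memVT_iff (T : X → X) (x : X) (μ : ProbabilityMeasure X) :
    memVT T x μ ↔ MapClusterPt μ atTop (emp T x) := by
  constructor
  · rintro ⟨n, hn, hconv⟩
    have hnk : ∀ k, n (k + 1) - 1 + 1 = n (k + 1) := fun k =>
      Nat.succ_pred_eq_of_pos (lt_of_lt_of_le (Nat.succ_pos k) hn.le_apply)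
    have htend : Tendsto (fun k => emp T x (n (k + 1) - 1)) atTop (𝓝 μ) := by
      rw [tendsto_emp_iff]
      intro φ hφ
      have h1 := (hconv φ hφ).comp (tendsto_add_atTop_nat 1)
      simp only [hnk]
      exact h1
    have hm : Tendsto (fun k => n (k + 1) - 1) atTop atTop :=
      tendsto_atTop_mono (fun k => by have := hn.le_apply (x := k + 1); simp only [id]; omega) tendsto_id
    have htend' : Tendsto (emp T x ∘ fun k => n (k + 1) - 1) atTop (𝓝 μ) := htend
    exact .of_comp hm htend'.mapClusterPt
  · intro h
    obtain ⟨ψ, hψ, hconv⟩ := TopologicalSpace.FirstCountableTopology.tendsto_subseq h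
    exact ⟨fun k => ψ k + 1, fun a b hab => by simpa using hψ hab,
      (tendsto_emp_iff T x μ ψ).mp hconv⟩

end Stmt8Aux

private theorem stmt8_aux {X : Type*} [MetricSpace X] [CompactSpace X] [MeasurableSpace X] [BorelSpace X]
    {T : X → X} (hT : Continuous T)
    (K L : Set (ProbabilityMeasure X)) (hKne : K.Nonempty)
    (hLK : L ⊆ K) (hLdense : K ⊆ closure L)
    (hL : Dense {x : X | ∀ μ ∈ L, memVT T x μ}) :
    {x : X | ∀ μ ∈ K, memVT T x μ} ∈ residual X := by
  have hsc : SecondCountableTopology (ProbabilityMeasure X) := Stmt8Aux.secondCountable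
  -- the set of cluster points of the empirical measures of x
  set V : X → Set (ProbabilityMeasure X) :=
    fun x => {μ : ProbabilityMeasure X | MapClusterPt μ atTop (Stmt8Aux.emp T x)} with hV
  have hclosed : ∀ x : X, IsClosed (V x) := fun x => isClosed_setOf_clusterPt
  have hiff : ∀ (x : X) (μ : ProbabilityMeasure X), memVT T x μ ↔ μ ∈ V x :=
    fun x μ => Stmt8Aux.memVT_iff T x μ
  -- a countable dense subset of `closure L`
  letI : MetricSpace (ProbabilityMeasure X) := TopologicalSpace.metrizableSpaceMetric _
  obtain ⟨D, hDL, hDcount, hDdense⟩ :=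
    (TopologicalSpace.IsSeparable.of_separableSpace (closure L)).exists_countable_dense_subset
  -- the dense set of points seeing all of L sees all of `closure L`
  have hSL : ∀ x ∈ {x : X | ∀ μ ∈ L, memVT T x μ}, closure L ⊆ V x := by
    intro x hx
    refine closure_minimal (fun μ hμ => ?_) (hclosed x)
    exact (hiff x μ).mp (hx μ hμ)
  -- each Gδ piece
  have hGδ : ∀ μ ∈ D, {x : X | MapClusterPt μ atTop (Stmt8Aux.emp T x)} ∈ residual X := by
    intro μ hμ
    refine residual_of_dense_Gδ (Stmt8Aux.isGdelta_setOf_mapClusterPt T hT μ) ?_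
    exact hL.mono fun x hx => hSL x hx (hDL hμ)
  have hG : (⋂ μ ∈ D, {x : X | MapClusterPt μ atTop (Stmt8Aux.emp T x)}) ∈ residual X :=
    (countable_bInter_mem hDcount).mpr hGδ
  refine mem_of_superset hG ?_
  intro x hx μ hμ
  simp only [Set.mem_iInter] at hx
  have hDV : D ⊆ V x := fun ν hν => hx ν hν
  have : closure D ⊆ V x := closure_minimal hDV (hclosed x)
  exact (hiff x μ).mpr (this (hDdense (hLdense hμ)))


theorem stmt8 {X : Type*} [MetricSpace X] [CompactSpace X] [MeasurableSpace X] [BorelSpace X]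
    (hX : NoIsolatedPoints X) {T : X → X} (hT : Continuous T)
    (K L : Set (ProbabilityMeasure X)) (hKne : K.Nonempty)
    (hKinv : K ⊆ {μ : ProbabilityMeasure X | InvariantProb T μ})
    (hLK : L ⊆ K) (hLdense : K ⊆ closure L)
    (hL : Dense {x : X | ∀ μ ∈ L, memVT T x μ}) :
    {x : X | ∀ μ ∈ K, memVT T x μ} ∈ residual X := by
  exact stmt8_aux hT K L hKne hLK hLdense hL
end

section
/- Let (X,d) be a compact metric space without isolated points and T: X → X a continuous map which is not minimal, such that the set of almost periodic (minimal) points of T is dense in X. Then there exist almost periodic points p and q whose orbit closures are disjoint. -/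
open Filter Topology MeasureTheory Metric Set TopologicalSpace

/-- A nonempty closed invariant set with no proper nonempty closed invariant subset. -/
def IsMinimalSet {X : Type*} [TopologicalSpace X] (T : X → X) (A : Set X) : Prop :=
  A.Nonempty ∧ IsClosed A ∧ T '' A ⊆ A ∧
    ∀ B ⊆ A, B.Nonempty → IsClosed B → T '' B ⊆ B → B = A

/-- `x` is an almost periodic (minimal) point: its orbit closure is a minimal set. -/
def AlmostPeriodicPt {X : Type*} [TopologicalSpace X] (T : X → X) (x : X) : Prop :=
  IsMinimalSet T (orbitClosure T x)

/-- `T` is a minimal map: every orbit is dense. -/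
def MinimalMap {X : Type*} [TopologicalSpace X] (T : X → X) : Prop :=
  ∀ x : X, Dense (Set.range fun n : ℕ => T^[n] x)

section Aux
variable {X : Type*} [TopologicalSpace X] {T : X → X}

lemma iter_mem {A : Set X} (hA : T '' A ⊆ A) {x : X} (hx : x ∈ A) (n : ℕ) : T^[n] x ∈ A := by
  induction n with
  | zero => simpa
  | succ n ih => rw [Function.iterate_succ_apply']; exact hA ⟨_, ih, rfl⟩

lemma orbitClosure_inv (hT : Continuous T) (x : X) :
    T '' orbitClosure T x ⊆ orbitClosure T x := by
  refine (image_closure_subset_closure_image hT).trans (closure_mono ?_)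
  rintro _ ⟨_, ⟨n, rfl⟩, rfl⟩
  exact ⟨n + 1, Function.iterate_succ_apply' T n x⟩

lemma mem_orbitClosure_self (x : X) : x ∈ orbitClosure T x :=
  subset_closure ⟨0, rfl⟩

lemma orbitClosure_subset (hT : Continuous T) {A : Set X} (hcl : IsClosed A)
    (hinv : T '' A ⊆ A) {x : X} (hx : x ∈ A) : orbitClosure T x ⊆ A :=
  closure_minimal (by rintro _ ⟨n, rfl⟩; exact iter_mem hinv hx n) hcl

/-- a point in a minimal set is almost periodic, with orbit closure the whole set -/
lemma ap_of_mem_minimal (hT : Continuous T) {A : Set X} (hA : IsMinimalSet T A)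
    {x : X} (hx : x ∈ A) : AlmostPeriodicPt T x ∧ orbitClosure T x = A := by
  obtain ⟨hne, hcl, hinv, hmin⟩ := hA
  have hsub : orbitClosure T x ⊆ A := orbitClosure_subset hT hcl hinv hx
  have heq : orbitClosure T x = A :=
    hmin _ hsub ⟨x, mem_orbitClosure_self x⟩ isClosed_closure (orbitClosure_inv hT x)
  refine ⟨⟨⟨x, mem_orbitClosure_self x⟩, isClosed_closure, orbitClosure_inv hT x, ?_⟩, heq⟩
  intro B hB hBne hBcl hBinv
  rw [heq] at hB ⊢
  exact hmin B hB hBne hBcl hBinv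

end Aux

theorem exists_minimal_subset {X : Type*} [MetricSpace X] [CompactSpace X]
    {T : X → X} (hT : Continuous T) {A : Set X} (hne : A.Nonempty) (hcl : IsClosed A)
    (hinv : T '' A ⊆ A) : ∃ M ⊆ A, IsMinimalSet T M := by
  set S : Set (Set X) := {B | B.Nonempty ∧ IsClosed B ∧ T '' B ⊆ B}
  have hzorn : ∀ c ⊆ S, IsChain (· ⊆ ·) c → c.Nonempty → ∃ lb ∈ S, ∀ s ∈ c, lb ⊆ s := by
    intro c hcS hchain hcne
    refine ⟨⋂₀ c, ⟨?_, ?_, ?_⟩, fun s hs => sInter_subset_of_mem hs⟩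
    · haveI : Nonempty c := hcne.to_subtype
      exact IsCompact.nonempty_sInter_of_directed_nonempty_isCompact_isClosed
        (fun a ha b hb => (hchain.total ha hb).elim
          (fun h => ⟨a, ha, Subset.rfl, h⟩) (fun h => ⟨b, hb, h, Subset.rfl⟩)) (fun U hU => (hcS hU).1)
        (fun U hU => (hcS hU).2.1.isCompact) (fun U hU => (hcS hU).2.1)
    · exact isClosed_sInter fun U hU => (hcS hU).2.1
    · rintro _ ⟨y, hy, rfl⟩ U hU
      exact (hcS hU).2.2 ⟨y, hy U hU, rfl⟩
  obtain ⟨M, hMA, hMS⟩ := zorn_superset_nonempty S hzorn A ⟨hne, hcl, hinv⟩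
  exact ⟨M, hMA, hMS.1.1, hMS.1.2.1, hMS.1.2.2, fun B hB hBne hBcl hBinv =>
    subset_antisymm hB (hMS.2 ⟨hBne, hBcl, hBinv⟩ hB)⟩

theorem stmt10 {X : Type*} [MetricSpace X] [CompactSpace X] (hX : NoIsolatedPoints X)
    {T : X → X} (hT : Continuous T) (hmin : ¬ MinimalMap T)
    (hAP : Dense {x : X | AlmostPeriodicPt T x}) :
    ∃ p q : X, AlmostPeriodicPt T p ∧ AlmostPeriodicPt T q ∧
      orbitClosure T p ∩ orbitClosure T q = ∅ := by
  rw [MinimalMap] at hmin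
  push_neg at hmin
  obtain ⟨x, hx⟩ := hmin
  have hAcl : IsClosed (orbitClosure T x) := isClosed_closure
  have hAprop : orbitClosure T x ≠ univ := by
    intro h
    exact hx (dense_iff_closure_eq.mpr h)
  -- complement nonempty open
  have hU : IsOpen (orbitClosure T x)ᶜ := hAcl.isOpen_compl
  have hUne : (orbitClosure T x)ᶜ.Nonempty := by
    rw [nonempty_compl]; exact hAprop
  obtain ⟨q, hq1, hq2⟩ := hAP.exists_mem_open hU hUne
  obtain ⟨M, hMA, hMmin⟩ := exists_minimal_subset hT ⟨x, mem_orbitClosure_self x⟩ hAcl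
    (orbitClosure_inv hT x)
  obtain ⟨p, hp⟩ := hMmin.1
  obtain ⟨hpAP, hpeq⟩ := ap_of_mem_minimal hT hMmin hp
  refine ⟨p, q, hpAP, hq1, ?_⟩
  by_contra h
  obtain ⟨z, hz⟩ := nonempty_iff_ne_empty.mpr h
  -- intersection is nonempty closed invariant subset of both minimal sets
  obtain ⟨hqne, hqcl, hqinv, hqm⟩ := hq1
  have hinter_inv : T '' (orbitClosure T p ∩ orbitClosure T q) ⊆
      orbitClosure T p ∩ orbitClosure T q := by
    rintro _ ⟨y, hy, rfl⟩
    exact ⟨orbitClosure_inv hT p ⟨y, hy.1, rfl⟩, orbitClosure_inv hT q ⟨y, hy.2, rfl⟩⟩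
  have hinter_cl : IsClosed (orbitClosure T p ∩ orbitClosure T q) :=
    isClosed_closure.inter isClosed_closure
  have heq2 : orbitClosure T p ∩ orbitClosure T q = orbitClosure T q :=
    hqm _ inter_subset_right ⟨z, hz⟩ hinter_cl hinter_inv
  have hqmem : q ∈ orbitClosure T p ∩ orbitClosure T q := by
    rw [heq2]; exact mem_orbitClosure_self q
  exact hq2 (hMA (hpeq ▸ hqmem.1))
end

section
/- Let (X,d) be a compact metric space without isolated points and T: X → X a transitive continuous map with the shadowing property which is not uniquely ergodic. Then every completely irregular point of T has dense orbit, i.e., CI(X,T) ⊆ Trans(X,T). -/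
open Filter Topology MeasureTheory Metric Set TopologicalSpace

namespace Aux11

lemma dense_compl_finite {X : Type*} [MetricSpace X] (hX : NoIsolatedPoints X)
    {s : Set X} (hs : s.Finite) : Dense sᶜ := by
  haveI : ∀ z : X, (𝓝[≠] z).NeBot := hX
  refine Set.Finite.induction_on (motive := fun s _ => Dense sᶜ) s hs (by simpa using dense_univ) ?_
  intro a s _ hsf ih
  have : (insert a s)ᶜ = {a}ᶜ ∩ sᶜ := by
    rw [Set.insert_eq, Set.compl_union]
  rw [this]
  exact Dense.inter_of_isOpen_left (dense_compl_singleton _) ih isOpen_compl_singleton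

lemma exists_transitive_point {X : Type*} [MetricSpace X] [CompactSpace X] [Nonempty X]
    {T : X → X} (hT : Continuous T) (htrans : TopTransitive T) :
    ∃ t : X, Dense (Set.range fun n : ℕ => T^[n] t) := by
  obtain ⟨b, hbc, hbne, hbasis⟩ := exists_countable_basis X
  set s : Set (Set X) := {U | U ∈ b ∧ U.Nonempty} with hs
  haveI : Countable s := (hbc.mono (fun U hU => hU.1)).to_subtype
  have hop : ∀ U : s, IsOpen (⋃ n : ℕ, T^[n] ⁻¹' (U : Set X)) := fun U =>
    isOpen_iUnion fun n => (hbasis.isOpen U.2.1).preimage (hT.iterate n)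
  have hdense : ∀ U : s, Dense (⋃ n : ℕ, T^[n] ⁻¹' (U : Set X)) := by
    intro U
    rw [dense_iff_inter_open]
    intro V hV hVne
    obtain ⟨n, z, hzV, hzU⟩ := htrans V U hV (hbasis.isOpen U.2.1) hVne U.2.2
    exact ⟨z, hzV, Set.mem_iUnion.2 ⟨n, hzU⟩⟩
  obtain ⟨t, ht⟩ := (dense_iInter_of_isOpen hop hdense).nonempty
  refine ⟨t, dense_iff_inter_open.2 ?_⟩
  intro V hV ⟨z, hz⟩
  obtain ⟨W, hWb, hzW, hWV⟩ := hbasis.exists_subset_of_mem_open hz hV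
  have hWs : W ∈ s := ⟨hWb, ⟨z, hzW⟩⟩
  have := Set.mem_iInter.1 ht ⟨W, hWs⟩
  obtain ⟨n, hn⟩ := Set.mem_iUnion.1 this
  exact ⟨T^[n] t, hWV hn, ⟨n, rfl⟩⟩

lemma tail_dense {X : Type*} [MetricSpace X] (hX : NoIsolatedPoints X)
    {T : X → X} {t : X} (hdense : Dense (Set.range fun n : ℕ => T^[n] t)) (M : ℕ) :
    Dense (Set.range fun n : ℕ => T^[M + n] t) := by
  set F : Set X := (fun n : ℕ => T^[n] t) '' (Set.Iio M) with hF
  have hFfin : F.Finite := (Set.finite_Iio M).image _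
  have hsub : Set.range (fun n : ℕ => T^[n] t) ⊆
      F ∪ Set.range fun n : ℕ => T^[M + n] t := by
    rintro _ ⟨n, rfl⟩
    rcases lt_or_ge n M with h | h
    · exact Or.inl ⟨n, h, rfl⟩
    · exact Or.inr ⟨n - M, by simp [Nat.add_sub_cancel' h]⟩
  have h1 : (Set.univ : Set X) ⊆ F ∪ closure (Set.range fun n : ℕ => T^[M + n] t) := by
    intro z _
    have hz : z ∈ closure (Set.range fun n : ℕ => T^[n] t) := hdense z
    have := closure_mono hsub hz
    rw [closure_union, hFfin.isClosed.closure_eq] at this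
    exact this
  have h2 : (F ᶜ : Set X) ⊆ closure (Set.range fun n : ℕ => T^[M + n] t) := by
    intro z hz
    rcases h1 (Set.mem_univ z) with h | h
    · exact absurd h hz
    · exact h
  have := (dense_compl_finite hX hFfin).mono h2
  rwa [dense_closure] at this


lemma chain_lemma {X : Type*} [MetricSpace X] {T : X → X} {t : X}
    (htail : ∀ M : ℕ, Dense (Set.range fun n : ℕ => T^[M + n] t))
    {δ : ℝ} (hδ : 0 < δ) (a b : X) :
    ∃ M : ℕ, 1 ≤ M ∧ ∃ c : ℕ → X, c 0 = a ∧ c M = b ∧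
      ∀ i < M, dist (T (c i)) (c (i + 1)) < δ := by
  obtain ⟨_, ⟨m, rfl⟩, hm⟩ := (htail 0).exists_mem_open isOpen_ball
    (nonempty_ball.2 hδ : (ball (T a) δ).Nonempty)
  simp only [Nat.zero_add] at hm
  obtain ⟨_, ⟨j, rfl⟩, hj⟩ := (htail (m + 1)).exists_mem_open isOpen_ball
    (nonempty_ball.2 hδ : (ball b δ).Nonempty)
  refine ⟨j + 2, by omega, fun i => if i = 0 then a else if i ≤ j + 1 then T^[m + (i - 1)] t else b,
    by simp, by simp, ?_⟩
  intro i hi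
  rcases Nat.eq_zero_or_pos i with rfl | hipos
  · have h1 : (1 : ℕ) ≤ j + 1 := by omega
    simp only [if_pos rfl, if_neg (by omega : ¬ (1 : ℕ) = 0), if_pos h1]
    simpa [dist_comm] using mem_ball.1 hm
  rcases lt_or_ge i (j + 1) with hlt | hge
  · have e1 : (if i = 0 then a else if i ≤ j + 1 then T^[m + (i - 1)] t else b)
        = T^[m + (i - 1)] t := by
      rw [if_neg (by omega), if_pos (by omega)]
    have e2 : (if i + 1 = 0 then a else if i + 1 ≤ j + 1 then T^[m + (i + 1 - 1)] t else b)
        = T^[m + i] t := by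
      rw [if_neg (by omega), if_pos (by omega)]
      simp
    beta_reduce
    rw [e1, e2]
    have : T (T^[m + (i - 1)] t) = T^[m + (i - 1) + 1] t := (Function.iterate_succ_apply' T _ t).symm
    rw [this]
    have : m + (i - 1) + 1 = m + i := by omega
    rw [this, dist_self]
    exact hδ
  · have hieq : i = j + 1 := by omega
    subst hieq
    have e1 : (if j + 1 = 0 then a else if j + 1 ≤ j + 1 then T^[m + (j + 1 - 1)] t else b)
        = T^[m + j] t := by
      rw [if_neg (by omega), if_pos le_rfl]
      simp
    have e2 : (if j + 1 + 1 = 0 then a else if j + 1 + 1 ≤ j + 1 then T^[m + (j + 1 + 1 - 1)] t else b)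
        = b := by
      rw [if_neg (by omega), if_neg (by omega)]
    beta_reduce
    rw [e1, e2]
    have : T (T^[m + j] t) = T^[m + 1 + j] t := by
      rw [← Function.iterate_succ_apply' T _ t]
      congr 1
      omega
    rw [this]
    exact mem_ball.1 hj


lemma step_ex {X : Type*} [MetricSpace X] {T : X → X} {φ : X → ℝ} {x y : X}
    {B cc δ1 : ℝ} {N : ℕ}
    (hφnn : ∀ z, 0 ≤ φ z) (hφB : ∀ z, φ z ≤ B)
    (hφx : ∀ i : ℕ, φ (T^[i] x) = 0)
    (hcc : 0 < cc) (hN : 1 ≤ N)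
    (hy : ∀ n, 2 * N ≤ n → cc ≤ (∑ i ∈ Finset.range n, φ (T^[i] y)) / n)
    (hδ1 : 0 < δ1)
    (hchain : ∀ a b : X, ∃ M : ℕ, 1 ≤ M ∧ ∃ c : ℕ → X, c 0 = a ∧ c M = b ∧
      ∀ i < M, dist (T (c i)) (c (i + 1)) < δ1)
    (k n : ℕ) (u : ℕ → X)
    (hu : ∀ i, dist (T (u i)) (u (i + 1)) < δ1)
    (hux : ∀ i, u (n + i) = T^[i] x) :
    ∃ (n' a b : ℕ) (u' : ℕ → X),
      (∀ i ≤ n, u' i = u i) ∧ (∀ i, dist (T (u' i)) (u' (i + 1)) < δ1) ∧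
      (∀ i, u' (n' + i) = T^[i] x) ∧
      k + 1 ≤ b ∧ n < b ∧ b < a ∧ a < n' ∧
      cc * (1 - 1 / (k + 1)) ≤ (∑ i ∈ Finset.range a, φ (u' i)) / a ∧
      (∑ i ∈ Finset.range b, φ (u' i)) / b ≤ B / (k + 1) := by
  have hB0 : 0 ≤ B := le_trans (hφnn x) (hφB x)
  set b := n + (k + 1) * (n + 1) with hb
  obtain ⟨M1, hM1, c1, hc10, hc1M, hc1⟩ := hchain (T^[(k + 1) * (n + 1)] x) y
  set n2 := b + M1 with hn2
  set L := max ((k + 1) * (n2 + 1)) (2 * N) with hL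
  set a := n2 + L with ha
  obtain ⟨M2, hM2, c2, hc20, hc2M, hc2⟩ := hchain (T^[L] y) x
  set n' := a + M2 with hn'
  have hkb : k + 1 ≤ (k + 1) * (n + 1) := Nat.le_mul_of_pos_right _ (by omega)
  have hL2N : 2 * N ≤ L := le_max_right _ _
  have hLk : (k + 1) * (n2 + 1) ≤ L := le_max_left _ _
  have hL1 : 1 ≤ L := by omega
  have hbn2 : b < n2 := by omega
  have hn2a : n2 < a := by omega
  have han' : a < n' := by omega
  have hnb : n < b := by omega
  have hn2b : n2 - b = M1 := by rw [hn2, Nat.add_sub_cancel_left]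
  have han2 : a - n2 = L := by rw [ha, Nat.add_sub_cancel_left]
  have hn'a : n' - a = M2 := by rw [hn', Nat.add_sub_cancel_left]
  set u' : ℕ → X := fun i =>
    if i ≤ b then u i
    else if i ≤ n2 then c1 (i - b)
    else if i ≤ a then T^[i - n2] y
    else if i ≤ n' then c2 (i - a)
    else T^[i - n'] x with hu'
  have w1 : ∀ i ≤ b, u' i = u i := by
    intro i h
    simp only [hu']
    rw [if_pos h]
  have w2 : ∀ i, b ≤ i → i ≤ n2 → u' i = c1 (i - b) := by
    intro i h1 h2
    rcases eq_or_lt_of_le h1 with rfl | hlt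
    · rw [w1 b le_rfl, Nat.sub_self, hc10]
      have := hux ((k + 1) * (n + 1))
      rw [← hb] at this
      exact this
    · simp only [hu']
      rw [if_neg (by omega), if_pos h2]
  have w3 : ∀ i, n2 ≤ i → i ≤ a → u' i = T^[i - n2] y := by
    intro i h1 h2
    rcases eq_or_lt_of_le h1 with rfl | hlt
    · rw [w2 n2 (le_of_lt hbn2) le_rfl, Nat.sub_self]
      rw [hn2b, hc1M]
      simp
    · simp only [hu']
      rw [if_neg (by omega), if_neg (by omega), if_pos h2]
  have w4 : ∀ i, a ≤ i → i ≤ n' → u' i = c2 (i - a) := by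
    intro i h1 h2
    rcases eq_or_lt_of_le h1 with rfl | hlt
    · rw [w3 a (le_of_lt hn2a) le_rfl, Nat.sub_self]
      rw [han2, hc20]
    · simp only [hu']
      rw [if_neg (by omega), if_neg (by omega), if_neg (by omega), if_pos h2]
  have w5 : ∀ i, n' ≤ i → u' i = T^[i - n'] x := by
    intro i h1
    rcases eq_or_lt_of_le h1 with rfl | hlt
    · rw [w4 n' (le_of_lt han') le_rfl]
      rw [hn'a, hc2M, Nat.sub_self]
      simp
    · simp only [hu']
      rw [if_neg (by omega), if_neg (by omega), if_neg (by omega), if_neg (by omega)]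
  have hjump : ∀ i, dist (T (u' i)) (u' (i + 1)) < δ1 := by
    intro i
    rcases le_or_gt (i + 1) b with h | h
    · rw [w1 i (by omega), w1 (i + 1) h]
      exact hu i
    rcases le_or_gt (i + 1) n2 with h2 | h2
    · rw [w2 i (by omega) (by omega), w2 (i + 1) (by omega) h2]
      have : i + 1 - b = (i - b) + 1 := by omega
      rw [this]
      exact hc1 (i - b) (by omega)
    rcases le_or_gt (i + 1) a with h3 | h3
    · rw [w3 i (by omega) (by omega), w3 (i + 1) (by omega) h3]
      have : i + 1 - n2 = (i - n2) + 1 := by omega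
      rw [this, ← Function.iterate_succ_apply' T (i - n2) y, dist_self]
      exact hδ1
    rcases le_or_gt (i + 1) n' with h4 | h4
    · rw [w4 i (by omega) (by omega), w4 (i + 1) (by omega) h4]
      have : i + 1 - a = (i - a) + 1 := by omega
      rw [this]
      exact hc2 (i - a) (by omega)
    · rw [w5 i (by omega), w5 (i + 1) (by omega)]
      have : i + 1 - n' = (i - n') + 1 := by omega
      rw [this, ← Function.iterate_succ_apply' T (i - n') x, dist_self]
      exact hδ1
  have htail : ∀ i, u' (n' + i) = T^[i] x := by
    intro i
    rw [w5 (n' + i) (by omega)]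
    congr 1
    omega
  -- low average at b
  have hlowsum : ∑ i ∈ Finset.range b, φ (u' i) = ∑ i ∈ Finset.range n, φ (u i) := by
    rw [Finset.range_eq_Ico, ← Finset.sum_Ico_consecutive _ (Nat.zero_le n) (le_of_lt hnb)]
    have e1 : ∑ i ∈ Finset.Ico 0 n, φ (u' i) = ∑ i ∈ Finset.Ico 0 n, φ (u i) := by
      apply Finset.sum_congr rfl
      intro i hi
      rw [Finset.mem_Ico] at hi
      rw [w1 i (by omega)]
    have e2 : ∑ i ∈ Finset.Ico n b, φ (u' i) = 0 := by
      apply Finset.sum_eq_zero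
      intro i hi
      rw [Finset.mem_Ico] at hi
      rw [w1 i (le_of_lt hi.2)]
      have : u i = T^[i - n] x := by
        have := hux (i - n)
        rwa [Nat.add_sub_cancel' hi.1] at this
      rw [this, hφx]
    rw [e1, e2, add_zero, Finset.range_eq_Ico]
  have hbpos : (0 : ℝ) < (b : ℝ) := by exact_mod_cast (by omega : 0 < b)
  have hk1pos : (0 : ℝ) < (k : ℝ) + 1 := by positivity
  have hlow : (∑ i ∈ Finset.range b, φ (u' i)) / b ≤ B / (k + 1) := by
    have hS : ∑ i ∈ Finset.range n, φ (u i) ≤ (n : ℝ) * B := by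
      calc ∑ i ∈ Finset.range n, φ (u i) ≤ ∑ _i ∈ Finset.range n, B :=
            Finset.sum_le_sum fun i _ => hφB _
        _ = (n : ℝ) * B := by rw [Finset.sum_const, Finset.card_range, nsmul_eq_mul]
    have hnkb : ((n : ℝ)) * ((k : ℝ) + 1) ≤ (b : ℝ) := by
      have h1 : n * (k + 1) ≤ b := by
        have h2 : n * (k + 1) ≤ (k + 1) * (n + 1) := by
          rw [Nat.mul_comm]
          exact Nat.mul_le_mul_left _ (Nat.le_succ n)
        omega
      exact_mod_cast h1
    rw [hlowsum, div_le_div_iff₀ hbpos hk1pos]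
    have t1 : (∑ i ∈ Finset.range n, φ (u i)) * ((k : ℝ) + 1) ≤ ((n : ℝ) * B) * ((k : ℝ) + 1) :=
      mul_le_mul_of_nonneg_right hS (le_of_lt hk1pos)
    have t2 : ((n : ℝ) * ((k : ℝ) + 1)) * B ≤ (b : ℝ) * B :=
      mul_le_mul_of_nonneg_right hnkb hB0
    nlinarith [t1, t2]
  have hapos : (0 : ℝ) < (a : ℝ) := by exact_mod_cast (by omega : 0 < a)
  have hhigh : cc * (1 - 1 / ((k : ℝ) + 1)) ≤ (∑ i ∈ Finset.range a, φ (u' i)) / a := by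
    have hsplit : ∑ i ∈ Finset.range a, φ (u' i)
        = ∑ i ∈ Finset.range n2, φ (u' i) + ∑ i ∈ Finset.Ico n2 a, φ (u' i) := by
      rw [Finset.range_eq_Ico, ← Finset.sum_Ico_consecutive _ (Nat.zero_le n2) (le_of_lt hn2a), Finset.range_eq_Ico]
    have hIco : ∑ i ∈ Finset.Ico n2 a, φ (u' i) = ∑ j ∈ Finset.range L, φ (T^[j] y) := by
      rw [Finset.sum_Ico_eq_sum_range]
      rw [han2]
      apply Finset.sum_congr rfl
      intro j hj
      rw [Finset.mem_range] at hj
      rw [w3 (n2 + j) (by omega) (by omega)]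
      have e2 : n2 + j - n2 = j := by omega
      rw [e2]
    have hLpos : (0 : ℝ) < (L : ℝ) := by exact_mod_cast (by omega : 0 < L)
    have hSY : cc * (L : ℝ) ≤ ∑ j ∈ Finset.range L, φ (T^[j] y) := by
      have := hy L (by omega)
      rw [le_div_iff₀ hLpos] at this
      linarith
    have hS0 : 0 ≤ ∑ i ∈ Finset.range n2, φ (u' i) := Finset.sum_nonneg fun i _ => hφnn _
    have hka : ((k : ℝ)) * (a : ℝ) ≤ (L : ℝ) * ((k : ℝ) + 1) := by
      have e1 : k * a = k * n2 + k * L := by rw [ha, Nat.mul_add]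
      have e2 : L * (k + 1) = L * k + L := Nat.mul_succ L k
      have e3 : k * L = L * k := Nat.mul_comm k L
      have h1 : k * n2 ≤ L := le_trans (Nat.mul_le_mul (Nat.le_succ k) (Nat.le_succ n2)) hLk
      have h2 : k * a ≤ L * (k + 1) := by omega
      exact_mod_cast h2
    rw [le_div_iff₀ hapos]
    have e4 : 1 - 1 / ((k : ℝ) + 1) = (k : ℝ) / ((k : ℝ) + 1) := by
      field_simp
      ring
    rw [e4]
    have e5 : cc * ((k : ℝ) / ((k : ℝ) + 1)) * (a : ℝ) = (cc * ((k : ℝ) * (a : ℝ))) / ((k : ℝ) + 1) := by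
      ring
    have h2 : cc * ((k : ℝ) * (a : ℝ)) ≤ cc * ((L : ℝ) * ((k : ℝ) + 1)) :=
      mul_le_mul_of_nonneg_left hka (le_of_lt hcc)
    have h3 : cc * ((k : ℝ) / ((k : ℝ) + 1)) * (a : ℝ) ≤ cc * (L : ℝ) := by
      rw [e5, div_le_iff₀ hk1pos]
      nlinarith [h2]
    linarith [hsplit.ge, hIco.ge, hSY, hS0, h3, hsplit.le]
  have hkb : k + 1 ≤ (k + 1) * (n + 1) := Nat.le_mul_of_pos_right _ (by omega)
  exact ⟨n', a, b, u', fun i hi => w1 i (by omega), hjump, htail,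
    by omega, hnb, by omega, by omega, hhigh, hlow⟩


structure PState (X : Type*) where
  n : ℕ
  u : ℕ → X
  a : ℕ
  b : ℕ

lemma build_irregular {X : Type*} [MetricSpace X] {T : X → X} {φ : X → ℝ} {x y : X}
    {B cc δ1 ε1 : ℝ} {N : ℕ}
    (hφnn : ∀ z, 0 ≤ φ z) (hφB : ∀ z, φ z ≤ B)
    (hφx : ∀ i : ℕ, φ (T^[i] x) = 0)
    (hcc : 0 < cc) (hN : 1 ≤ N)
    (hy : ∀ n, 2 * N ≤ n → cc ≤ (∑ i ∈ Finset.range n, φ (T^[i] y)) / n)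
    (hδ1 : 0 < δ1)
    (hchain : ∀ a b : X, ∃ M : ℕ, 1 ≤ M ∧ ∃ c : ℕ → X, c 0 = a ∧ c M = b ∧
      ∀ i < M, dist (T (c i)) (c (i + 1)) < δ1)
    (hlip : ∀ z w : X, |φ z - φ w| ≤ dist z w)
    (hε1 : ε1 = cc / 3)
    (hsh : ∀ u : ℕ → X, (∀ n, dist (T (u n)) (u (n + 1)) < δ1) →
      ∃ w : X, ∀ n, dist (T^[n] w) (u n) < ε1) :
    ∃ w : X, ¬ ∃ l : ℝ,
      Tendsto (fun n => (∑ j ∈ Finset.range n, φ (T^[j] w)) / n) atTop (𝓝 l) := by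
  classical
  have hε1pos : 0 < ε1 := by rw [hε1]; linarith
  set Good : PState X → Prop := fun p =>
    (∀ i, dist (T (p.u i)) (p.u (i + 1)) < δ1) ∧ (∀ i, p.u (p.n + i) = T^[i] x) with hGood
  have key : ∀ (k : ℕ) (p : PState X), Good p → ∃ q : PState X, Good q ∧
      ((∀ i ≤ p.n, q.u i = p.u i) ∧ k + 1 ≤ q.b ∧ p.n < q.b ∧ q.b < q.a ∧ q.a < q.n ∧
      cc * (1 - 1 / (k + 1)) ≤ (∑ i ∈ Finset.range q.a, φ (q.u i)) / q.a ∧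
      (∑ i ∈ Finset.range q.b, φ (q.u i)) / q.b ≤ B / (k + 1)) := by
    intro k p hp
    obtain ⟨n', a, b, u', hpre, hjump, htail, hb1, hb2, hb3, hb4, hhigh, hlow⟩ :=
      step_ex hφnn hφB hφx hcc hN hy hδ1 hchain k p.n p.u hp.1 hp.2
    exact ⟨⟨n', u', a, b⟩, ⟨hjump, htail⟩, hpre, hb1, hb2, hb3, hb4, hhigh, hlow⟩
  have hinit : Good ⟨0, fun i => T^[i] x, 0, 0⟩ := by
    constructor
    · intro i
      simp only
      rw [← Function.iterate_succ_apply' T i x, dist_self]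
      exact hδ1
    · intro i
      simp
  obtain ⟨g, hg0, hgs⟩ : ∃ g : ℕ → {p : PState X // Good p},
      g 0 = ⟨⟨0, fun i => T^[i] x, 0, 0⟩, hinit⟩ ∧
      ∀ k, (g (k + 1) : PState X) = Classical.choose (key k (g k).1 (g k).2) :=
    ⟨fun m => Nat.rec ⟨⟨0, fun i => T^[i] x, 0, 0⟩, hinit⟩
      (fun k p => ⟨Classical.choose (key k p.1 p.2),
        (Classical.choose_spec (key k p.1 p.2)).1⟩) m, rfl, fun _ => rfl⟩
  have hrel : ∀ k, (∀ i ≤ (g k).1.n, (g (k + 1)).1.u i = (g k).1.u i) ∧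
      k + 1 ≤ (g (k + 1)).1.b ∧ (g k).1.n < (g (k + 1)).1.b ∧
      (g (k + 1)).1.b < (g (k + 1)).1.a ∧ (g (k + 1)).1.a < (g (k + 1)).1.n ∧
      cc * (1 - 1 / (k + 1)) ≤
        (∑ i ∈ Finset.range (g (k + 1)).1.a, φ ((g (k + 1)).1.u i)) / (g (k + 1)).1.a ∧
      (∑ i ∈ Finset.range (g (k + 1)).1.b, φ ((g (k + 1)).1.u i)) / (g (k + 1)).1.b
        ≤ B / (k + 1) := by
    intro k
    have h := (Classical.choose_spec (key k (g k).1 (g k).2)).2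
    rw [← hgs k] at h
    exact h
  have hmono : ∀ k, (g k).1.n < (g (k + 1)).1.n := by
    intro k
    have h := hrel k
    omega
  have hmono' : Monotone fun k => (g k).1.n :=
    monotone_nat_of_le_succ fun k => le_of_lt (hmono k)
  have hnk : ∀ k, k ≤ (g k).1.n := by
    intro k
    induction k with
    | zero => exact Nat.zero_le _
    | succ k ih => have := hmono k; omega
  have hagree : ∀ k j, k ≤ j → ∀ i ≤ (g k).1.n, (g j).1.u i = (g k).1.u i := by
    intro k j hkj
    induction j, hkj using Nat.le_induction with
    | base => intro i _; rfl
    | succ j hkj ih =>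
      intro i hi
      rw [(hrel j).1 i (le_trans hi (hmono' hkj)), ih i hi]
  set u : ℕ → X := fun i => (g i).1.u i with hudef
  have huf : ∀ k i, i ≤ (g k).1.n → u i = (g k).1.u i := by
    intro k i hi
    rcases le_total i k with h | h
    · exact (hagree i k h i (hnk i)).symm
    · exact hagree k i h i hi
  have hjumps : ∀ i, dist (T (u i)) (u (i + 1)) < δ1 := by
    intro i
    rw [huf (i + 1) i (by have := hnk (i + 1); omega), huf (i + 1) (i + 1) (hnk (i + 1))]
    exact (g (i + 1)).2.1 i
  set A : ℕ → ℕ := fun k => (g (k + 1)).1.a with hAdef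
  set Bt : ℕ → ℕ := fun k => (g (k + 1)).1.b with hBtdef
  have hAn : ∀ k, A k ≤ (g (k + 1)).1.n := fun k => le_of_lt (hrel k).2.2.2.2.1
  have hBtn : ∀ k, Bt k ≤ (g (k + 1)).1.n := by
    intro k
    have h := hrel k
    simp only [hAdef, hBtdef] at *
    omega
  have hsumA : ∀ k, ∑ i ∈ Finset.range (A k), φ (u i)
      = ∑ i ∈ Finset.range (A k), φ ((g (k + 1)).1.u i) := by
    intro k
    apply Finset.sum_congr rfl
    intro i hi
    rw [Finset.mem_range] at hi
    rw [huf (k + 1) i (le_trans (le_of_lt hi) (hAn k))]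
  have hsumB : ∀ k, ∑ i ∈ Finset.range (Bt k), φ (u i)
      = ∑ i ∈ Finset.range (Bt k), φ ((g (k + 1)).1.u i) := by
    intro k
    apply Finset.sum_congr rfl
    intro i hi
    rw [Finset.mem_range] at hi
    rw [huf (k + 1) i (le_trans (le_of_lt hi) (hBtn k))]
  have hhighA : ∀ k : ℕ, cc * (1 - 1 / ((k : ℝ) + 1)) ≤
      (∑ i ∈ Finset.range (A k), φ (u i)) / (A k) := by
    intro k
    rw [hsumA k]
    exact (hrel k).2.2.2.2.2.1
  have hlowB : ∀ k : ℕ, (∑ i ∈ Finset.range (Bt k), φ (u i)) / (Bt k) ≤ B / ((k : ℝ) + 1) := by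
    intro k
    rw [hsumB k]
    exact (hrel k).2.2.2.2.2.2
  have hAk : ∀ k, k + 1 ≤ A k := by
    intro k
    have h := hrel k
    simp only [hAdef] at *
    omega
  have hBtk : ∀ k, k + 1 ≤ Bt k := fun k => (hrel k).2.1
  obtain ⟨w, hw⟩ := hsh u hjumps
  have havg : ∀ n : ℕ, 1 ≤ n →
      |(∑ j ∈ Finset.range n, φ (T^[j] w)) / n - (∑ j ∈ Finset.range n, φ (u j)) / n| ≤ ε1 := by
    intro n hn
    have hnpos : (0 : ℝ) < n := by exact_mod_cast hn
    rw [div_sub_div_same, abs_div, abs_of_pos hnpos, div_le_iff₀ hnpos]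
    rw [← Finset.sum_sub_distrib]
    calc |∑ j ∈ Finset.range n, (φ (T^[j] w) - φ (u j))|
        ≤ ∑ j ∈ Finset.range n, |φ (T^[j] w) - φ (u j)| := Finset.abs_sum_le_sum_abs _ _
      _ ≤ ∑ _j ∈ Finset.range n, ε1 := Finset.sum_le_sum fun j _ =>
          le_of_lt (lt_of_le_of_lt (hlip _ _) (hw j))
      _ = n * ε1 := by rw [Finset.sum_const, Finset.card_range, nsmul_eq_mul]
      _ ≤ ε1 * n := by rw [mul_comm]
  refine ⟨w, ?_⟩
  rintro ⟨l, hl⟩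
  have hAtend : Tendsto (fun k => A k) atTop atTop :=
    tendsto_atTop_mono (fun k => by simp only [id_eq]; have := hAk k; omega) tendsto_id
  have hBtend : Tendsto (fun k => Bt k) atTop atTop :=
    tendsto_atTop_mono (fun k => by simp only [id_eq]; have := hBtk k; omega) tendsto_id
  have h1A : Tendsto (fun k => (∑ j ∈ Finset.range (A k), φ (T^[j] w)) / (A k)) atTop (𝓝 l) :=
    hl.comp hAtend
  have h1B : Tendsto (fun k => (∑ j ∈ Finset.range (Bt k), φ (T^[j] w)) / (Bt k)) atTop (𝓝 l) :=
    hl.comp hBtend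
  have h0 := tendsto_one_div_add_atTop_nhds_zero_nat (𝕜 := ℝ)
  have h2 : Tendsto (fun k : ℕ => cc * (1 - 1 / ((k : ℝ) + 1)) - ε1) atTop (𝓝 (cc - ε1)) := by
    have := (((tendsto_const_nhds : Tendsto (fun _ : ℕ => (1:ℝ)) atTop (𝓝 1)).sub h0).const_mul
      cc).sub (tendsto_const_nhds : Tendsto (fun _ : ℕ => ε1) atTop (𝓝 ε1))
    simpa using this
  have h4 : Tendsto (fun k : ℕ => B / ((k : ℝ) + 1) + ε1) atTop (𝓝 ε1) := by
    have := (h0.const_mul B).add (tendsto_const_nhds : Tendsto (fun _ : ℕ => ε1) atTop (𝓝 ε1))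
    simp only [mul_zero, zero_add] at this
    convert this using 2 with k
    rw [div_eq_mul_one_div]
  have hboundA : ∀ k : ℕ, cc * (1 - 1 / ((k : ℝ) + 1)) - ε1 ≤
      (∑ j ∈ Finset.range (A k), φ (T^[j] w)) / (A k) := by
    intro k
    have h5 := havg (A k) (by have := hAk k; omega)
    have h6 := hhighA k
    rw [abs_le] at h5
    linarith [h5.1]
  have hboundB : ∀ k : ℕ, (∑ j ∈ Finset.range (Bt k), φ (T^[j] w)) / (Bt k) ≤
      B / ((k : ℝ) + 1) + ε1 := by
    intro k
    have h5 := havg (Bt k) (by have := hBtk k; omega)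
    have h6 := hlowB k
    rw [abs_le] at h5
    linarith [h5.2]
  have hle1 : cc - ε1 ≤ l := le_of_tendsto_of_tendsto' h2 h1A hboundA
  have hle2 : l ≤ ε1 := le_of_tendsto_of_tendsto' h1B h4 hboundB
  rw [hε1] at hle1 hle2
  linarith


lemma exists_high_avg {X : Type*} [MetricSpace X] {T : X → X} {φ : X → ℝ} {p : X}
    (hφnn : ∀ z, 0 ≤ φ z) (hlip : ∀ z w : X, |φ z - φ w| ≤ dist z w)
    (hφp : 0 < φ p) {ε0 δ0 : ℝ} (hε0 : ε0 = φ p / 4) (hδ0 : 0 < δ0)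
    (hchain : ∀ a b : X, ∃ M : ℕ, 1 ≤ M ∧ ∃ c : ℕ → X, c 0 = a ∧ c M = b ∧
      ∀ i < M, dist (T (c i)) (c (i + 1)) < δ0)
    (hsh : ∀ u : ℕ → X, (∀ n, dist (T (u n)) (u (n + 1)) < δ0) →
      ∃ y : X, ∀ n, dist (T^[n] y) (u n) < ε0) :
    ∃ (N : ℕ) (y : X) (cc : ℝ), 1 ≤ N ∧ 0 < cc ∧
      ∀ n, 2 * N ≤ n → cc ≤ (∑ i ∈ Finset.range n, φ (T^[i] y)) / n := by
  obtain ⟨N, hN, c, hc0, hcN, hc⟩ := hchain p p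
  set v : ℕ → X := fun n => c (n % N) with hv
  have hNpos : 0 < N := hN
  have hvjump : ∀ n, dist (T (v n)) (v (n + 1)) < δ0 := by
    intro n
    have hr : n % N < N := Nat.mod_lt _ hNpos
    have e : (n % N + 1) % N = (n + 1) % N := (Nat.ModEq.add_right 1 (Nat.mod_modEq n N))
    rcases eq_or_lt_of_le (Nat.succ_le_of_lt hr) with heq | hlt
    · rw [Nat.succ_eq_add_one] at heq
      have e2 : (n + 1) % N = 0 := by
        rw [← e, heq, Nat.mod_self]
      have : v (n + 1) = c (n % N + 1) := by
        simp only [hv, e2, hc0, heq, hcN]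
      rw [this]
      exact hc _ hr
    · have e2 : (n + 1) % N = n % N + 1 := by
        rw [← e, Nat.mod_eq_of_lt hlt]
      have : v (n + 1) = c (n % N + 1) := by simp only [hv, e2]
      rw [this]
      exact hc _ hr
  obtain ⟨y, hyv⟩ := hsh v hvjump
  have hval : ∀ k : ℕ, φ p - ε0 ≤ φ (T^[k * N] y) := by
    intro k
    have hvk : v (k * N) = p := by
      simp only [hv, Nat.mul_mod_left, hc0]
    have h1 := hyv (k * N)
    rw [hvk] at h1
    have h2 := hlip p (T^[k * N] y)
    rw [abs_sub_le_iff] at h2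
    have := h2.1
    rw [dist_comm] at h1
    linarith
  have hc0' : 0 < φ p - ε0 := by rw [hε0]; linarith
  refine ⟨N, y, (φ p - ε0) / (2 * N), hN, by positivity, ?_⟩
  intro n hn
  have hnpos : (0 : ℝ) < n := by
    have : 0 < n := by omega
    exact_mod_cast this
  have hcount : ((n / N : ℕ) : ℝ) * (φ p - ε0) ≤ ∑ i ∈ Finset.range n, φ (T^[i] y) := by
    have hsub : (Finset.range (n / N)).image (fun k => k * N) ⊆ Finset.range n := by
      intro i hi
      rw [Finset.mem_image] at hi
      obtain ⟨k, hk, rfl⟩ := hi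
      rw [Finset.mem_range] at hk ⊢
      calc k * N < (k + 1) * N := by
            have := hNpos
            nlinarith [Nat.succ_le_of_lt hNpos]
        _ ≤ (n / N) * N := Nat.mul_le_mul_right _ hk
        _ ≤ n := Nat.div_mul_le_self n N
    have hinj : Set.InjOn (fun k => k * N) (Finset.range (n / N)) := by
      intro i _ j _ hij
      exact Nat.eq_of_mul_eq_mul_right hNpos hij
    have h1 : ∑ k ∈ Finset.range (n / N), φ (T^[k * N] y)
        = ∑ i ∈ (Finset.range (n / N)).image (fun k => k * N), φ (T^[i] y) :=
      (Finset.sum_image (f := fun i => φ (T^[i] y)) (fun i hi j hj hij => hinj hi hj hij)).symm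
    have h2 : ∑ i ∈ (Finset.range (n / N)).image (fun k => k * N), φ (T^[i] y)
        ≤ ∑ i ∈ Finset.range n, φ (T^[i] y) :=
      Finset.sum_le_sum_of_subset_of_nonneg hsub fun i _ _ => hφnn _
    have h3 : ((n / N : ℕ) : ℝ) * (φ p - ε0) ≤ ∑ k ∈ Finset.range (n / N), φ (T^[k * N] y) := by
      calc ((n / N : ℕ) : ℝ) * (φ p - ε0)
          = ∑ _k ∈ Finset.range (n / N), (φ p - ε0) := by
            rw [Finset.sum_const, Finset.card_range, nsmul_eq_mul]
        _ ≤ ∑ k ∈ Finset.range (n / N), φ (T^[k * N] y) :=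
            Finset.sum_le_sum fun k _ => hval k
    linarith
  have h2nat : n ≤ 2 * (N * (n / N)) := by
    have hd := Nat.div_add_mod n N
    have hm : n % N < N := Nat.mod_lt _ hNpos
    omega
  have hq : (n : ℝ) ≤ 2 * ((N : ℝ) * ((n / N : ℕ) : ℝ)) := by exact_mod_cast h2nat
  rw [le_div_iff₀ hnpos]
  have hNr : (0 : ℝ) < (N : ℝ) := by exact_mod_cast hNpos
  have key : (φ p - ε0) / (2 * N) * n ≤ ((n / N : ℕ) : ℝ) * (φ p - ε0) := by
    rw [div_mul_eq_mul_div, div_le_iff₀ (by positivity : (0 : ℝ) < 2 * (N : ℝ))]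
    nlinarith [hq, hc0']
  linarith

end Aux11


theorem stmt11 {X : Type*} [MetricSpace X] [CompactSpace X] [MeasurableSpace X] [BorelSpace X]
    (hX : NoIsolatedPoints X) {T : X → X} (hT : Continuous T)
    (htrans : TopTransitive T) (hsh : ShadowingProperty T)
    (hue : ¬ ∃! μ : ProbabilityMeasure X, InvariantProb T μ) :
    completelyIrregular T ⊆ {x : X | Dense (Set.range fun n : ℕ => T^[n] x)} := by
  intro x hx
  by_contra hnd
  haveI : Nonempty X := ⟨x⟩
  obtain ⟨t, ht⟩ := Aux11.exists_transitive_point hT htrans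
  have htail := Aux11.tail_dense hX ht
  set C := closure (Set.range fun n : ℕ => T^[n] x) with hC
  have hCc : IsClosed C := isClosed_closure
  have hxC : x ∈ C := subset_closure ⟨0, rfl⟩
  obtain ⟨p, hp⟩ : ∃ p, p ∉ C := by
    by_contra h
    push_neg at h
    exact hnd fun z => h z
  set φ : X → ℝ := fun z => infDist z C with hφ
  have hφnn : ∀ z, 0 ≤ φ z := fun z => infDist_nonneg
  have hlip : ∀ z w : X, |φ z - φ w| ≤ dist z w := by
    intro z w
    rw [abs_sub_le_iff]
    constructor
    · have := infDist_le_infDist_add_dist (s := C) (x := z) (y := w)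
      linarith
    · have := infDist_le_infDist_add_dist (s := C) (x := w) (y := z)
      rw [dist_comm] at this
      linarith
  have hφx : ∀ i : ℕ, φ (T^[i] x) = 0 := fun i =>
    infDist_zero_of_mem (subset_closure ⟨i, rfl⟩)
  have hφp : 0 < φ p := by
    rcases lt_or_eq_of_le (hφnn p) with h | h
    · exact h
    · exfalso
      apply hp
      rw [← hCc.closure_eq]
      exact (mem_closure_iff_infDist_zero ⟨x, hxC⟩).2 h.symm
  have hφcont : Continuous φ := continuous_infDist_pt C
  have hφB : ∀ z, φ z ≤ diam (Set.univ : Set X) := by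
    intro z
    calc φ z ≤ dist z x := infDist_le_dist_of_mem hxC
      _ ≤ diam (Set.univ : Set X) :=
        dist_le_diam_of_mem isCompact_univ.isBounded trivial trivial
  obtain ⟨δ0, hδ0, hsh0⟩ := hsh (φ p / 4) (by positivity)
  obtain ⟨N, y, cc, hN, hcc, hy⟩ := Aux11.exists_high_avg hφnn hlip hφp rfl hδ0
    (fun a b => Aux11.chain_lemma htail hδ0 a b) hsh0
  obtain ⟨δ1, hδ1, hsh1⟩ := hsh (cc / 3) (by positivity)
  obtain ⟨w, hw⟩ := Aux11.build_irregular hφnn hφB hφx hcc hN hy hδ1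
    (fun a b => Aux11.chain_lemma htail hδ1 a b) hlip rfl hsh1
  have hwI : w ∈ irregularSet T φ := hw
  have hxreg : ∃ l : ℝ, Tendsto (fun n => birkhoffAvg T φ x n) atTop (𝓝 l) := by
    refine ⟨0, ?_⟩
    have h0 : ∀ n : ℕ, birkhoffAvg T φ x n = 0 := by
      intro n
      simp [birkhoffAvg, hφx]
    simpa [h0] using (tendsto_const_nhds : Tendsto (fun _ : ℕ => (0:ℝ)) atTop (𝓝 0))
  exact (hx φ hφcont ⟨w, hwI⟩) hxreg
end

section
/- Let (Y,d) be a Baire metric space and Φ = (φ_n) a sequence of continuous bounded real-valued functions on Y with limsup_n ‖φ_n‖_∞ < ∞. If Y is Φ-chaotic, then the irregular set I(Φ) = {y ∈ Y : lim_n φ_n(y) does not exist} is Baire generic in Y. -/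
open Filter Topology MeasureTheory Metric Set TopologicalSpace

/-- The set of accumulation points of a real sequence. -/
def accPoints (u : ℕ → ℝ) : Set ℝ := {r | MapClusterPt r atTop u}

/-- `Y` is `Φ`-chaotic. -/
def PhiChaotic {Y : Type*} [MetricSpace Y] (φ : ℕ → Y → ℝ) : Prop :=
  ∃ (Fam : Set (Set Y)) (ε : ℝ), 0 < ε ∧ ∀ U : Set Y, IsOpen U → U.Nonempty →
    ∃ a ∈ (⋃₀ Fam) ∩ U, ∃ b ∈ (⋃₀ Fam) ∩ U,
      ε < Metric.diam (accPoints (fun n => φ n a) ∪ accPoints (fun n => φ n b))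

/-!
If `n ↦ φ n y` converges, then for every `δ > 0` its tail from some time `N` on oscillates by
at most `δ`; so the regular set lies in the countable union of the closed sets `F_N` of points
whose tails from `N` oscillate by at most `ε / 4`, with `ε` the constant of chaos. Chaos makes each `F_N` nowhere dense: on an
open subset of `F_N` on which `φ N` varies by less than `ε / 4`, every accumulation set lies in
one interval of length `ε`, so no two of them have a union of diameter larger than `ε`.
-/

def tailOscSet {Y : Type*} (φ : ℕ → Y → ℝ) (δ : ℝ) (N : ℕ) : Set Y :=
  {y | ∀ j ≥ N, ∀ k ≥ N, dist (φ j y) (φ k y) ≤ δ}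

section TailOscSet

variable {Y : Type*} {φ : ℕ → Y → ℝ}

theorem isClosed_tailOscSet [TopologicalSpace Y] (hcont : ∀ n, Continuous (φ n)) (δ : ℝ)
    (N : ℕ) : IsClosed (tailOscSet φ δ N) := by
  simp only [tailOscSet, ofPred_forall]
  exact isClosed_biInter fun j _ => isClosed_biInter fun k _ =>
    isClosed_le ((hcont j).dist (hcont k)) continuous_const

theorem CauchySeq.exists_mem_tailOscSet {y : Y} (hy : CauchySeq fun n => φ n y) {δ : ℝ}
    (hδ : 0 < δ) : ∃ N, y ∈ tailOscSet φ δ N := by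
  obtain ⟨N, hN⟩ := Metric.cauchySeq_iff.1 hy δ hδ
  exact ⟨N, fun j hj k hk => (hN j hj k hk).le⟩

end TailOscSet

theorem accPoints_subset_closedBall {u : ℕ → ℝ} {N : ℕ} {δ : ℝ}
    (h : ∀ n ≥ N, dist (u n) (u N) ≤ δ) : accPoints u ⊆ closedBall (u N) δ := fun _ hr =>
  isClosed_closedBall.closure_subset
    (hr.mem_closure_of_mem _ (mem_map.2 (mem_atTop_sets.2 ⟨N, h⟩)))

theorem PhiChaotic.exists_pos_forall_isOpen {Y : Type*} [MetricSpace Y] {φ : ℕ → Y → ℝ}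
    (h : PhiChaotic φ) : ∃ ε > 0, ∀ U : Set Y, IsOpen U → U.Nonempty →
      ∃ a ∈ U, ∃ b ∈ U, ε < diam (accPoints (φ · a) ∪ accPoints (φ · b)) := by
  obtain ⟨_, ε, hε, hU⟩ := h
  refine ⟨ε, hε, fun U hUo hUne => ?_⟩
  obtain ⟨a, ha, b, hb, hdiam⟩ := hU U hUo hUne
  exact ⟨a, ha.2, b, hb.2, hdiam⟩

theorem interior_tailOscSet_eq_empty {Y : Type*} [TopologicalSpace Y] {φ : ℕ → Y → ℝ}
    (hcont : ∀ n, Continuous (φ n)) {ε : ℝ} (hε : 0 < ε)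
    (hchaos : ∀ U : Set Y, IsOpen U → U.Nonempty →
      ∃ a ∈ U, ∃ b ∈ U, ε < diam (accPoints (φ · a) ∪ accPoints (φ · b)))
    (N : ℕ) : interior (tailOscSet φ (ε / 4) N) = ∅ := by
  refine eq_empty_iff_forall_notMem.2 fun x hx => ?_
  set V := interior (tailOscSet φ (ε / 4) N) ∩ φ N ⁻¹' ball (φ N x) (ε / 4)
  have hVo : IsOpen V := isOpen_interior.inter ((hcont N).isOpen_preimage _ isOpen_ball)
  obtain ⟨a, ha, b, hb, hdiam⟩ := hchaos V hVo ⟨x, hx, mem_ball_self (by positivity)⟩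
  have hacc : ∀ c ∈ V, accPoints (φ · c) ⊆ closedBall (φ N x) (ε / 2) := fun c hc =>
    (accPoints_subset_closedBall fun n hn => interior_subset hc.1 n hn N le_rfl).trans
      (closedBall_subset_closedBall' (by linarith [mem_ball.1 hc.2]))
  have hsmall : diam (accPoints (φ · a) ∪ accPoints (φ · b)) ≤ ε :=
    calc diam (accPoints (φ · a) ∪ accPoints (φ · b))
        ≤ diam (closedBall (φ N x) (ε / 2)) :=
          diam_mono (union_subset (hacc a ha) (hacc b hb)) isBounded_closedBall
      _ ≤ 2 * (ε / 2) := diam_closedBall (by positivity)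
      _ = ε := by ring
  linarith

theorem stmt13_general {Y : Type*} [MetricSpace Y] (φ : ℕ → Y → ℝ)
    (hcont : ∀ n, Continuous (φ n))
    (hchaos : PhiChaotic φ) :
    {y : Y | ¬ ∃ l : ℝ, Tendsto (fun n => φ n y) atTop (𝓝 l)} ∈ residual Y := by
  obtain ⟨ε, hε, hpair⟩ := hchaos.exists_pos_forall_isOpen
  have hmeagre : IsMeagre (⋃ N, tailOscSet φ (ε / 4) N) := isMeagre_iUnion fun N =>
    ((isClosed_tailOscSet hcont _ N).isNowhereDense_iff.2
      (interior_tailOscSet_eq_empty hcont hε hpair N)).isMeagre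
  refine hmeagre.mono ?_
  rintro y ⟨l, hl⟩
  exact mem_iUnion.2 (hl.cauchySeq.exists_mem_tailOscSet (by positivity))

theorem stmt13 {Y : Type*} [MetricSpace Y] [BaireSpace Y] (φ : ℕ → Y → ℝ)
    (hcont : ∀ n, Continuous (φ n)) (hbd : ∀ n, ∃ C : ℝ, ∀ y, |φ n y| ≤ C)
    (hlimsup : ∃ C : ℝ, ∀ᶠ n in atTop, ∀ y, |φ n y| ≤ C)
    (hchaos : PhiChaotic φ) :
    {y : Y | ¬ ∃ l : ℝ, Tendsto (fun n => φ n y) atTop (𝓝 l)} ∈ residual Y :=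
  stmt13_general φ hcont hchaos
end

section
/- Let (Y,d) be a Baire metric space and Φ = (φ_n) a sequence of continuous bounded real-valued functions on Y with limsup_n ‖φ_n‖_∞ < ∞. Then Y is Φ-chaotic if and only if Y is Φ-sensitive. -/
open Filter Topology MeasureTheory Metric Set TopologicalSpace

/-- `Y` is `Φ`-sensitive. -/
def PhiSensitive {Y : Type*} [MetricSpace Y] (φ : ℕ → Y → ℝ) : Prop :=
  ∃ (A B : Set Y) (ε : ℝ), 0 < ε ∧ Dense A ∧ Dense B ∧
    ∀ a ∈ A, ∀ b ∈ B,
      ∃ r ∈ accPoints (fun n => φ n a), ∃ s ∈ accPoints (fun n => φ n b), ε < |r - s|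

/-!
Chaos with constant `ε` forces the oscillation `limsup φₙ(y) - liminf φₙ(y)` to be at least `ε`
on a residual set. For rational `p`, the points with `φₙ(y) > p` infinitely often form a `Gδ` set
`S`, and at residual points `y ∉ S` already gives `y ∉ closure S`. So if `q ≤ φₙ(y) ≤ p`
eventually, the same holds on a neighbourhood of `y`, all of whose points have their accumulation
points in `[q, p]`, and chaos forces `ε < p - q`. By the Baire property this residual set is
dense; since `limsup` and `liminf` are accumulation points, any two of its points `a, b` satisfy
`(limsup a - liminf b) + (limsup b - liminf a) ≥ 2ε`, which gives sensitivity with `ε / 2`.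
Conversely, accumulation points are uniformly bounded, so the diameter dominates `|r - s|`.
-/

section AccPoints

variable {u : ℕ → ℝ} {C : ℝ}

lemma accPoints_subset_of_eventually_mem {s : Set ℝ} (hs : IsClosed s)
    (hu : ∀ᶠ n in atTop, u n ∈ s) : accPoints u ⊆ s :=
  fun _ hr => hs.mem_of_mapClusterPt hr hu

lemma accPoints_subset_Icc (hu : ∀ᶠ n in atTop, |u n| ≤ C) : accPoints u ⊆ Icc (-C) C :=
  accPoints_subset_of_eventually_mem isClosed_Icc (hu.mono fun _ h => abs_le.mp h)

lemma isBoundedUnder_le_of_eventually_abs_le (hu : ∀ᶠ n in atTop, |u n| ≤ C) :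
    IsBoundedUnder (· ≤ ·) atTop u :=
  isBoundedUnder_of_eventually_le (hu.mono fun _ h => (abs_le.mp h).2)

lemma isBoundedUnder_ge_of_eventually_abs_le (hu : ∀ᶠ n in atTop, |u n| ≤ C) :
    IsBoundedUnder (· ≥ ·) atTop u :=
  isBoundedUnder_of_eventually_ge (hu.mono fun _ h => (abs_le.mp h).1)

lemma limsup_mem_accPoints (hu : ∀ᶠ n in atTop, |u n| ≤ C) : limsup u atTop ∈ accPoints u :=
  MapClusterPt.limsup (isBoundedUnder_ge_of_eventually_abs_le hu).isCoboundedUnder_flip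
    (isBoundedUnder_le_of_eventually_abs_le hu)

lemma liminf_mem_accPoints (hu : ∀ᶠ n in atTop, |u n| ≤ C) : liminf u atTop ∈ accPoints u :=
  MapClusterPt.liminf (isBoundedUnder_le_of_eventually_abs_le hu).isCoboundedUnder_flip
    (isBoundedUnder_ge_of_eventually_abs_le hu)

lemma le_limsup_sub_liminf_of_forall_rat {ε : ℝ} (hu : ∀ᶠ n in atTop, |u n| ≤ C)
    (h : ∀ p q : ℚ, (∀ᶠ n in atTop, u n ≤ p) → (∀ᶠ n in atTop, q ≤ u n) → ε < p - q) :
    ε ≤ limsup u atTop - liminf u atTop := by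
  by_contra! hlt
  have hd : 0 < (ε - (limsup u atTop - liminf u atTop)) / 2 := half_pos (sub_pos.mpr hlt)
  obtain ⟨p, hLp, hpd⟩ := exists_rat_btwn (lt_add_of_pos_right (limsup u atTop) hd)
  obtain ⟨q, hqd, hql⟩ := exists_rat_btwn (sub_lt_self (liminf u atTop) hd)
  have hup : ∀ᶠ n in atTop, u n ≤ p := (eventually_lt_of_limsup_lt hLp
    (isBoundedUnder_le_of_eventually_abs_le hu)).mono fun _ h => h.le
  have hqu : ∀ᶠ n in atTop, q ≤ u n := (eventually_lt_of_lt_liminf hql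
    (isBoundedUnder_ge_of_eventually_abs_le hu)).mono fun _ h => h.le
  linarith [h p q hup hqu]

end AccPoints

lemma isGδ_setOf_frequently_mem {X : Type*} [TopologicalSpace X] {U : ℕ → Set X}
    (hU : ∀ n, IsOpen (U n)) : IsGδ {x | ∃ᶠ n in atTop, x ∈ U n} := by
  have : {x | ∃ᶠ n in atTop, x ∈ U n} = ⋂ N, ⋃ n ≥ N, U n := by
    ext; simp [frequently_atTop]
  rw [this]
  exact .iInter fun N => (isOpen_biUnion fun n _ => hU n).isGδ

lemma IsGδ.eventually_residual_notMem_imp_eventually_nhds {X : Type*} [TopologicalSpace X]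
    {s : Set X} (hs : IsGδ s) : ∀ᶠ x in residual X, x ∉ s → ∀ᶠ z in 𝓝 x, z ∉ s := by
  have hdense : Dense (s ∪ (closure s)ᶜ) := by
    refine dense_iff_closure_eq.mpr (eq_univ_of_subset ?_ (union_compl_self (closure s)))
    rw [closure_union]
    exact union_subset_union_right _ subset_closure
  filter_upwards [residual_of_dense_Gδ (hs.union isClosed_closure.isOpen_compl.isGδ) hdense]
    with x hx hxs
  exact mem_of_superset (isClosed_closure.isOpen_compl.mem_nhds (hx.resolve_left hxs))
    fun z hz hzs => hz (subset_closure hzs)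

lemma eventually_residual_forall_rat_eventually_nhds {X : Type*} [TopologicalSpace X]
    {φ : ℕ → X → ℝ} (hcont : ∀ n, Continuous (φ n)) :
    ∀ᶠ y in residual X, ∀ p q : ℚ, (∀ᶠ n in atTop, φ n y ≤ p) → (∀ᶠ n in atTop, q ≤ φ n y) →
      ∀ᶠ z in 𝓝 y, ∀ᶠ n in atTop, φ n z ∈ Icc (q : ℝ) p := by
  have hle : ∀ p : ℚ, ∀ᶠ y in residual X,
      (∀ᶠ n in atTop, φ n y ≤ p) → ∀ᶠ z in 𝓝 y, ∀ᶠ n in atTop, φ n z ≤ p := fun p => by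
    simpa only [mem_ofPred_eq, not_frequently, not_lt] using
      (isGδ_setOf_frequently_mem fun n => isOpen_lt continuous_const (hcont n)
        ).eventually_residual_notMem_imp_eventually_nhds (s := {y | ∃ᶠ n in atTop, (p : ℝ) < φ n y})
  have hge : ∀ q : ℚ, ∀ᶠ y in residual X,
      (∀ᶠ n in atTop, q ≤ φ n y) → ∀ᶠ z in 𝓝 y, ∀ᶠ n in atTop, q ≤ φ n z := fun q => by
    simpa only [mem_ofPred_eq, not_frequently, not_lt] using
      (isGδ_setOf_frequently_mem fun n => isOpen_lt (hcont n) continuous_const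
        ).eventually_residual_notMem_imp_eventually_nhds (s := {y | ∃ᶠ n in atTop, φ n y < q})
  filter_upwards [eventually_countable_forall.mpr hle, eventually_countable_forall.mpr hge]
    with y hley hgey p q hp hq
  filter_upwards [hley p hp, hgey q hq] with z hzp hzq
  filter_upwards [hzp, hzq] with n hnp hnq using ⟨hnq, hnp⟩

section Chaos

variable {Y : Type*} [MetricSpace Y] {φ : ℕ → Y → ℝ} {C : ℝ}

lemma phiChaotic_iff : PhiChaotic φ ↔ ∃ ε > 0, ∀ U : Set Y, IsOpen U → U.Nonempty →
    ∃ a ∈ U, ∃ b ∈ U, ε < diam (accPoints (φ · a) ∪ accPoints (φ · b)) := by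
  constructor
  · rintro ⟨_, ε, hε, h⟩
    refine ⟨ε, hε, fun U hU hne => ?_⟩
    obtain ⟨a, ha, b, hb, hab⟩ := h U hU hne
    exact ⟨a, ha.2, b, hb.2, hab⟩
  · rintro ⟨ε, hε, h⟩
    refine ⟨{univ}, ε, hε, fun U hU hne => ?_⟩
    simpa using h U hU hne

lemma lt_sub_of_eventually_nhds_eventually_mem_Icc {ε p q : ℝ} {y : Y}
    (hε : ∀ U : Set Y, IsOpen U → U.Nonempty →
      ∃ a ∈ U, ∃ b ∈ U, ε < diam (accPoints (φ · a) ∪ accPoints (φ · b)))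
    (hy : ∀ᶠ z in 𝓝 y, ∀ᶠ n in atTop, φ n z ∈ Icc q p) : ε < p - q := by
  obtain ⟨U, hUsub, hU, hyU⟩ := _root_.mem_nhds_iff.mp hy
  obtain ⟨a, ha, b, hb, hab⟩ := hε U hU ⟨y, hyU⟩
  have hqp : q ≤ p := by
    obtain ⟨n, hn⟩ := (hUsub ha).exists
    exact hn.1.trans hn.2
  have hsub : accPoints (φ · a) ∪ accPoints (φ · b) ⊆ Icc q p :=
    union_subset (accPoints_subset_of_eventually_mem isClosed_Icc (hUsub ha))
      (accPoints_subset_of_eventually_mem isClosed_Icc (hUsub hb))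
  calc ε < _ := hab
    _ ≤ diam (Icc q p) := diam_mono hsub (isBounded_Icc q p)
    _ = p - q := Real.diam_Icc hqp

lemma PhiChaotic.exists_eventually_residual_le_limsup_sub_liminf (h : PhiChaotic φ)
    (hcont : ∀ n, Continuous (φ n)) (hC : ∀ y, ∀ᶠ n in atTop, |φ n y| ≤ C) :
    ∃ ε > 0, ∀ᶠ y in residual Y, ε ≤ limsup (φ · y) atTop - liminf (φ · y) atTop := by
  obtain ⟨ε, hε, hU⟩ := phiChaotic_iff.mp h
  refine ⟨ε, hε, ?_⟩
  filter_upwards [eventually_residual_forall_rat_eventually_nhds hcont] with y hy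
  exact le_limsup_sub_liminf_of_forall_rat (hC y) fun p q hp hq =>
    lt_sub_of_eventually_nhds_eventually_mem_Icc hU (hy p q hp hq)

lemma phiSensitive_of_dense_le_limsup_sub_liminf {ε : ℝ} (hε : 0 < ε)
    (hC : ∀ y, ∀ᶠ n in atTop, |φ n y| ≤ C)
    (hD : Dense {y | ε ≤ limsup (φ · y) atTop - liminf (φ · y) atTop}) : PhiSensitive φ := by
  refine ⟨_, _, ε / 2, half_pos hε, hD, hD, fun a ha b hb => ?_⟩
  by_cases hab : ε / 2 < limsup (φ · a) atTop - liminf (φ · b) atTop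
  · exact ⟨_, limsup_mem_accPoints (hC a), _, liminf_mem_accPoints (hC b),
      hab.trans_le (le_abs_self _)⟩
  · refine ⟨_, liminf_mem_accPoints (hC a), _, limsup_mem_accPoints (hC b), ?_⟩
    rw [abs_sub_comm]
    exact lt_of_lt_of_le (by rw [mem_ofPred_eq] at ha hb; linarith) (le_abs_self _)

lemma PhiChaotic.phiSensitive [BaireSpace Y] (h : PhiChaotic φ) (hcont : ∀ n, Continuous (φ n))
    (hC : ∀ y, ∀ᶠ n in atTop, |φ n y| ≤ C) : PhiSensitive φ :=
  let ⟨_, hε, hres⟩ := h.exists_eventually_residual_le_limsup_sub_liminf hcont hC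
  phiSensitive_of_dense_le_limsup_sub_liminf hε hC (dense_of_mem_residual hres)

lemma PhiSensitive.phiChaotic (h : PhiSensitive φ) (hC : ∀ y, ∀ᶠ n in atTop, |φ n y| ≤ C) :
    PhiChaotic φ := by
  obtain ⟨A, B, ε, hε, hA, hB, hAB⟩ := h
  refine phiChaotic_iff.mpr ⟨ε, hε, fun U hU hne => ?_⟩
  obtain ⟨a, haU, haA⟩ := hA.inter_open_nonempty U hU hne
  obtain ⟨b, hbU, hbB⟩ := hB.inter_open_nonempty U hU hne
  obtain ⟨r, hr, s, hs, hrs⟩ := hAB a haA b hbB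
  have hbdd : Bornology.IsBounded (accPoints (φ · a) ∪ accPoints (φ · b)) :=
    (isBounded_Icc (-C) C).subset
      (union_subset (accPoints_subset_Icc (hC a)) (accPoints_subset_Icc (hC b)))
  exact ⟨a, haU, b, hbU, hrs.trans_le (dist_le_diam_of_mem hbdd (.inl hr) (.inr hs))⟩

end Chaos

theorem stmt14_general {Y : Type*} [MetricSpace Y] [BaireSpace Y] (φ : ℕ → Y → ℝ)
    (hcont : ∀ n, Continuous (φ n))
    (hlimsup : ∃ C : ℝ, ∀ᶠ n in atTop, ∀ y, |φ n y| ≤ C) :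
    PhiChaotic φ ↔ PhiSensitive φ := by
  obtain ⟨C, hC⟩ := hlimsup
  have hCy : ∀ y, ∀ᶠ n in atTop, |φ n y| ≤ C := fun y => hC.mono fun _ h => h y
  exact ⟨fun h => h.phiSensitive hcont hCy, fun h => h.phiChaotic hCy⟩

theorem stmt14 {Y : Type*} [MetricSpace Y] [BaireSpace Y] (φ : ℕ → Y → ℝ)
    (hcont : ∀ n, Continuous (φ n)) (hbd : ∀ n, ∃ C : ℝ, ∀ y, |φ n y| ≤ C)
    (hlimsup : ∃ C : ℝ, ∀ᶠ n in atTop, ∀ y, |φ n y| ≤ C) :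
    PhiChaotic φ ↔ PhiSensitive φ :=
  stmt14_general φ hcont hlimsup
end

section
/- Let (Y,d) be a Baire metric space, T: Y → Y continuous, and φ: Y → ℝ continuous and bounded. If there exist a dense subset D of Y and ε > 0 such that diam(W_φ(x)) > ε for every x ∈ D, where W_φ(x) is the set of accumulation points of the Birkhoff averages of φ along the orbit of x, then the irregular set I(T,φ) is Baire generic in Y. -/
open Filter Topology MeasureTheory Metric Set TopologicalSpace

/-- `W_φ(x)`: the set of accumulation points of the Birkhoff averages of `φ` at `x`. -/
def WSet {Y : Type*} [TopologicalSpace Y] (T : Y → Y) (φ : Y → ℝ) (x : Y) : Set ℝ :=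
  ⋂ N : ℕ, closure ((fun n => birkhoffAvg T φ x n) '' Set.Ici N)

theorem stmt15 {Y : Type*} [MetricSpace Y] [BaireSpace Y] {T : Y → Y} (hT : Continuous T)
    {φ : Y → ℝ} (hφ : Continuous φ) (hbd : ∃ C : ℝ, ∀ y, |φ y| ≤ C)
    (D : Set Y) (hD : Dense D) (ε : ℝ) (hε : 0 < ε)
    (hdiam : ∀ x ∈ D, ε < Metric.diam (WSet T φ x)) :
    irregularSet T φ ∈ residual Y := by
  classical
  have hcont : ∀ n, Continuous fun x => birkhoffAvg T φ x n := by
    intro n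
    unfold birkhoffAvg
    exact (continuous_finset_sum _ (fun j _ => hφ.comp (hT.iterate j))).div_const _
  set A : ℕ → Set Y := fun N =>
    {x | ∃ m ≥ N, ∃ n ≥ N, ε < birkhoffAvg T φ x m - birkhoffAvg T φ x n} with hA
  have hopen : ∀ N, IsOpen (A N) := by
    intro N
    have : A N = ⋃ m ∈ Set.Ici N, ⋃ n ∈ Set.Ici N,
        {x | ε < birkhoffAvg T φ x m - birkhoffAvg T φ x n} := by
      ext x; simp [hA, Set.mem_Ici]
    rw [this]
    exact isOpen_biUnion fun m _ => isOpen_biUnion fun n _ =>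
      isOpen_lt continuous_const ((hcont m).sub (hcont n))
  have hdense : ∀ N, Dense (A N) := by
    intro N
    refine hD.mono ?_
    intro x hx
    have hd := hdiam x hx
    -- get two points at distance > ε in WSet
    have hpq : ∃ p ∈ WSet T φ x, ∃ q ∈ WSet T φ x, ε < dist p q := by
      by_contra h
      push_neg at h
      exact absurd (Metric.diam_le_of_forall_dist_le hε.le
        (fun p hp q hq => h p hp q hq)) (not_le.mpr hd)
    obtain ⟨p, hp, q, hq, hpqd⟩ := hpq
    -- WLOG q < p
    rcases abs_cases (p - q) with ⟨habs, _⟩ | ⟨habs, _⟩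
    case _ =>
      have hεpq : ε < p - q := by rwa [Real.dist_eq, habs] at hpqd
      set η := (p - q - ε) / 2 with hη
      have hηpos : 0 < η := by simp [hη]; linarith
      have hp' := Set.mem_iInter.mp hp N
      have hq' := Set.mem_iInter.mp hq N
      obtain ⟨bp, hbp, hbpd⟩ := Metric.mem_closure_iff.mp hp' η hηpos
      obtain ⟨bq, hbq, hbqd⟩ := Metric.mem_closure_iff.mp hq' η hηpos
      obtain ⟨m, hm, hbm⟩ := hbp
      obtain ⟨n, hn, hbn⟩ := hbq
      refine ⟨m, hm, n, hn, ?_⟩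
      rw [← hbm] at hbpd
      rw [← hbn] at hbqd
      rw [Real.dist_eq, abs_lt] at hbpd hbqd
      linarith
    case _ =>
      have hεpq : ε < q - p := by
        rw [Real.dist_eq, habs] at hpqd; linarith
      set η := (q - p - ε) / 2 with hη
      have hηpos : 0 < η := by simp [hη]; linarith
      have hp' := Set.mem_iInter.mp hp N
      have hq' := Set.mem_iInter.mp hq N
      obtain ⟨bp, hbp, hbpd⟩ := Metric.mem_closure_iff.mp hp' η hηpos
      obtain ⟨bq, hbq, hbqd⟩ := Metric.mem_closure_iff.mp hq' η hηpos
      obtain ⟨m, hm, hbm⟩ := hbq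
      obtain ⟨n, hn, hbn⟩ := hbp
      refine ⟨m, hm, n, hn, ?_⟩
      rw [← hbm] at hbqd
      rw [← hbn] at hbpd
      rw [Real.dist_eq, abs_lt] at hbpd hbqd
      linarith
  have hres : (⋂ N, A N) ∈ residual Y := by
    refine (countable_iInter_mem.mpr ?_)
    intro N
    exact residual_of_dense_open (hopen N) (hdense N)
  refine Filter.mem_of_superset hres ?_
  intro x hx
  intro ⟨l, hl⟩
  rw [Metric.tendsto_atTop] at hl
  obtain ⟨N, hN⟩ := hl (ε / 2) (by linarith)
  obtain ⟨m, hm, n, hn, hmn⟩ := Set.mem_iInter.mp hx N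
  have h1 := hN m hm
  have h2 := hN n hn
  rw [Real.dist_eq, abs_lt] at h1 h2
  linarith
end

section
/- Let (Y,d) be a Baire metric space, (W,D) a compact metric space, and Φ = (φ_n) a sequence of continuous maps φ_n: Y → W. Let G_Φ: Y → K(W) be the set valued function G_Φ(y) = ⋂_{n≥1} closure{φ_k(y) : k ≥ n}, where K(W) is the space of nonempty compact subsets of W with the Hausdorff metric. Then there exists a Baire generic subset S of Y such that G_Φ restricted to S is continuous (as a map into K(W)) at every point of S. -/
open Filter Topology MeasureTheory Metric Set TopologicalSpace

/-- The set valued function induced by a sequence of maps into a compact metric space,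
viewed as a map into the space of nonempty compact subsets with the Hausdorff metric. -/
noncomputable def inducedSetValued {Y W : Type*} [TopologicalSpace Y] [MetricSpace W]
    [CompactSpace W] (φ : ℕ → Y → W) (y : Y) : TopologicalSpace.NonemptyCompacts W :=
  ⟨⟨⋂ n : ℕ, closure ((fun k => φ k y) '' Set.Ici n),
    (isClosed_iInter fun _ => isClosed_closure).isCompact⟩, by
      apply IsCompact.nonempty_iInter_of_sequence_nonempty_isCompact_isClosed
      · intro n
        exact closure_mono (fun x ⟨m, hm, hx⟩ => ⟨m, le_trans (Nat.le_succ n) hm, hx⟩)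
      · intro n
        exact (Set.Nonempty.image _ Set.nonempty_Ici).closure
      · exact isClosed_closure.isCompact
      · intro n
        exact isClosed_closure⟩

namespace Stmt16Aux

variable {Y W : Type*} [TopologicalSpace Y] [MetricSpace W] [CompactSpace W]
variable (φ : ℕ → Y → W)

/-- Finite piece of the orbit, as a nonempty compact set. -/
noncomputable def Ffin (n m : ℕ) (y : Y) : NonemptyCompacts W :=
  ⟨⟨(fun k => φ k y) '' Set.Icc n (n + m),
    ((Set.finite_Icc n (n + m)).image _).isCompact⟩,
    (Set.Nonempty.image _ (Set.nonempty_Icc.2 (Nat.le_add_right n m)))⟩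

/-- Closure of the tail of the orbit, as a nonempty compact set. -/
noncomputable def Ftail (n : ℕ) (y : Y) : NonemptyCompacts W :=
  ⟨⟨closure ((fun k => φ k y) '' Set.Ici n), isClosed_closure.isCompact⟩,
    (Set.Nonempty.image _ Set.nonempty_Ici).closure⟩

lemma continuous_Ffin (hcont : ∀ n, Continuous (φ n)) (n m : ℕ) :
    Continuous fun y => Ffin φ n m y := by
  rw [continuous_iff_continuousAt]
  intro y
  rw [ContinuousAt, Metric.tendsto_nhds]
  intro ε hε
  have h : ∀ᶠ z in 𝓝 y, ∀ k ∈ Set.Icc n (n + m), dist (φ k z) (φ k y) < ε / 2 := by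
    rw [eventually_all_finite (Set.finite_Icc n (n + m))]
    intro k _
    exact Metric.tendsto_nhds.1 (hcont k).continuousAt (ε / 2) (by positivity)
  filter_upwards [h] with z hz
  have hd : dist (Ffin φ n m z) (Ffin φ n m y) ≤ ε / 2 := by
    rw [NonemptyCompacts.dist_eq]
    apply hausdorffDist_le_of_mem_dist (by positivity)
    · rintro x ⟨k, hk, rfl⟩
      exact ⟨φ k y, Set.mem_image_of_mem _ hk, (hz k hk).le⟩
    · rintro x ⟨k, hk, rfl⟩
      exact ⟨φ k z, Set.mem_image_of_mem _ hk, by rw [dist_comm]; exact (hz k hk).le⟩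
  linarith

lemma tendsto_Ffin (n : ℕ) (y : Y) :
    Tendsto (fun m => Ffin φ n m y) atTop (𝓝 (Ftail φ n y)) := by
  rw [Metric.tendsto_atTop]
  intro ε hε
  set T : Set W := (fun k => φ k y) '' Set.Ici n with hT
  have htb : TotallyBounded T :=
    (isCompact_univ.totallyBounded).subset (Set.subset_univ _)
  obtain ⟨t, hts, htfin, hcov⟩ :=
    totallyBounded_iff_subset.1 htb _ (Metric.dist_mem_uniformity (show (0:ℝ) < ε/4 by positivity))
  have hchoice : ∀ x ∈ t, ∃ k, n ≤ k ∧ φ k y = x := by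
    intro x hx
    obtain ⟨k, hk, rfl⟩ := hts hx
    exact ⟨k, hk, rfl⟩
  choose! g hg1 hg2 using hchoice
  have hbdd : BddAbove (g '' t) := (htfin.image g).bddAbove
  obtain ⟨N, hN⟩ := hbdd
  refine ⟨N, fun m hm => ?_⟩
  have hd : dist (Ffin φ n m y) (Ftail φ n y) ≤ ε / 2 := by
    rw [NonemptyCompacts.dist_eq]
    apply hausdorffDist_le_of_mem_dist (by positivity)
    · rintro x ⟨k, hk, rfl⟩
      exact ⟨φ k y, subset_closure ⟨k, hk.1, rfl⟩, by simp only [dist_self]; positivity⟩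
    · intro w hw
      obtain ⟨a, haT, hwa⟩ := Metric.mem_closure_iff.1 hw (ε/4) (by positivity)
      obtain ⟨x, hxt, hax⟩ := by
        have := hcov haT
        simpa using this
      refine ⟨x, ?_, ?_⟩
      · have hk1 := hg1 x hxt
        have hk2 := hg2 x hxt
        have hle : g x ≤ N := hN (Set.mem_image_of_mem g hxt)
        exact ⟨g x, ⟨hk1, le_trans hle (le_trans hm (Nat.le_add_left m n))⟩, hk2⟩
      · calc dist w x ≤ dist w a + dist a x := dist_triangle _ _ _
          _ ≤ ε/4 + ε/4 := by
              have : dist a x < ε/4 := hax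
              linarith [hwa.le, this.le]
          _ = ε/2 := by ring
  linarith

lemma Ftail_antitone {n m : ℕ} (h : n ≤ m) (y : Y) :
    (Ftail φ m y : Set W) ⊆ (Ftail φ n y : Set W) :=
  closure_mono (Set.image_mono (Set.Ici_subset_Ici.2 h))

lemma coe_inducedSetValued (y : Y) :
    (inducedSetValued φ y : Set W) = ⋂ n : ℕ, (Ftail φ n y : Set W) := rfl

lemma tendsto_Ftail (y : Y) :
    Tendsto (fun n => Ftail φ n y) atTop (𝓝 (inducedSetValued φ y)) := by
  rw [Metric.tendsto_atTop]
  intro ε hε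
  set G : Set W := (inducedSetValued φ y : Set W) with hG
  have hGsub : ∀ n, G ⊆ (Ftail φ n y : Set W) := by
    intro n
    rw [hG, coe_inducedSetValued]
    exact Set.iInter_subset _ n
  have hGne : G.Nonempty := (inducedSetValued φ y).nonempty
  have key : ∃ N, ∀ w ∈ (Ftail φ N y : Set W), infDist w G < ε / 2 := by
    by_contra hcon
    push_neg at hcon
    set C : ℕ → Set W := fun n => (Ftail φ n y : Set W) ∩ {w | ε / 2 ≤ infDist w G} with hC
    have hCne : ∀ n, (C n).Nonempty := by
      intro n
      obtain ⟨w, hw1, hw2⟩ := hcon n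
      exact ⟨w, hw1, hw2⟩
    have hCcl : ∀ n, IsClosed (C n) := fun n =>
      (isClosed_closure).inter (isClosed_le continuous_const (continuous_infDist_pt G))
    have hne : (⋂ n, C n).Nonempty := by
      apply IsCompact.nonempty_iInter_of_sequence_nonempty_isCompact_isClosed
      · intro n
        exact Set.inter_subset_inter_left _ (Ftail_antitone φ (Nat.le_succ n) y)
      · exact hCne
      · exact (hCcl 0).isCompact
      · exact hCcl
    obtain ⟨w, hw⟩ := hne
    have hwG : w ∈ G := by
      rw [hG, coe_inducedSetValued]
      exact Set.mem_iInter.2 fun n => ((Set.mem_iInter.1 hw) n).1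
    have : ε / 2 ≤ infDist w G := ((Set.mem_iInter.1 hw) 0).2
    rw [infDist_zero_of_mem hwG] at this
    linarith
  obtain ⟨N, hN⟩ := key
  refine ⟨N, fun m hm => ?_⟩
  have hd : dist (Ftail φ m y) (inducedSetValued φ y) ≤ ε / 2 := by
    rw [NonemptyCompacts.dist_eq]
    apply hausdorffDist_le_of_mem_dist (by positivity)
    · intro x hx
      have : infDist x G < ε / 2 := hN x (Ftail_antitone φ hm y hx)
      obtain ⟨z, hz, hdz⟩ := (infDist_lt_iff hGne).1 this
      exact ⟨z, hz, hdz.le⟩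
    · intro z hz
      exact ⟨z, hGsub m hz, by simp only [dist_self]; positivity⟩
  linarith

lemma measurable_inducedSetValued [MeasurableSpace Y] [BorelSpace Y]
    [MeasurableSpace (NonemptyCompacts W)] [BorelSpace (NonemptyCompacts W)]
    (hcont : ∀ n, Continuous (φ n)) :
    Measurable (inducedSetValued φ) := by
  have hFt : ∀ n, Measurable (Ftail φ n) := fun n =>
    measurable_of_tendsto_metrizable (fun m => (continuous_Ffin φ hcont n m).measurable)
      (tendsto_pi_nhds.2 fun y => tendsto_Ffin φ n y)
  exact measurable_of_tendsto_metrizable hFt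
    (tendsto_pi_nhds.2 fun y => tendsto_Ftail φ y)

/-- Kuratowski: a Borel-measurable map into a second countable space is
continuous on a residual set. -/
theorem exists_residual_continuousOn {α M : Type*} [TopologicalSpace α]
    [MeasurableSpace α] [BorelSpace α] [TopologicalSpace M] [SecondCountableTopology M]
    {f : α → M} (hf : ∀ t : Set M, IsOpen t → MeasurableSet (f ⁻¹' t)) :
    ∃ S ∈ residual α, ContinuousOn f S := by
  have hB := isBasis_countableBasis M
  have hBc := countable_countableBasis M
  have h : ∀ V ∈ countableBasis M, ∃ u : Set α, IsOpen u ∧ (f ⁻¹' V) =ᵇ u := fun V hV =>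
    (hf V (isOpen_of_mem_countableBasis hV)).residualEq_isOpen
  choose! u huo hueq using h
  refine ⟨⋂ V ∈ countableBasis M, {y | y ∈ f ⁻¹' V ↔ y ∈ u V}, ?_, ?_⟩
  · refine (countable_bInter_mem hBc).2 fun V hV => ?_
    have := Filter.eventuallyEq_set.1 (hueq V hV)
    filter_upwards [this] with y hy using hy
  · rw [_root_.continuousOn_iff']
    intro t ht
    refine ⟨⋃ V ∈ {V ∈ countableBasis M | V ⊆ t}, u V, ?_, ?_⟩
    · exact isOpen_biUnion fun V hV => huo V hV.1
    · ext y
      simp only [Set.mem_inter_iff, Set.mem_iInter, Set.mem_iUnion, Set.mem_setOf_eq,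
        Set.mem_preimage, exists_prop]
      constructor
      · rintro ⟨hyt, hyS⟩
        obtain ⟨V, hVB, hyV, hVt⟩ := hB.exists_subset_of_mem_open hyt ht
        exact ⟨⟨V, ⟨hVB, hVt⟩, (hyS V hVB).1 hyV⟩, hyS⟩
      · rintro ⟨⟨V, ⟨hVB, hVt⟩, hyuV⟩, hyS⟩
        exact ⟨hVt ((hyS V hVB).2 hyuV), hyS⟩

end Stmt16Aux


theorem stmt16 {Y W : Type*} [MetricSpace Y] [BaireSpace Y] [MetricSpace W] [CompactSpace W]
    (φ : ℕ → Y → W) (hcont : ∀ n, Continuous (φ n)) :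
    ∃ S : Set Y, S ∈ residual Y ∧
      ContinuousOn (inducedSetValued φ) S := by
  borelize Y
  letI : MeasurableSpace (NonemptyCompacts W) := borel _
  haveI : BorelSpace (NonemptyCompacts W) := ⟨rfl⟩
  have hmeas := Stmt16Aux.measurable_inducedSetValued φ hcont
  obtain ⟨S, hS, hc⟩ := Stmt16Aux.exists_residual_continuousOn
    (f := inducedSetValued φ) (fun t ht => hmeas ht.measurableSet)
  exact ⟨S, hS, hc⟩
end
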